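/- arXiv:math/0409437 — 3 statements merged into one kernel-verified Lean document; each statement's English description precedes it below -/
import Mathlib

section
/- Let n be a positive integer and let t, t_0, t_1 be arbitrary complex numbers. Then, as an identity of rational functions in the variables z_1, …, z_n, the sum over all sign vectors ε ∈ {±1}^n of ∏_{1≤i≤n} (1 − t_0 z_i^{ε_i})(1 − t_1 z_i^{ε_i})/(1 − z_i^{2ε_i}) · ∏_{1≤i<j≤n} (1 − t z_i^{ε_i} z_j^{ε_j})/(1 − z_i^{ε_i} z_j^{ε_j}) equals the constant ∏_{1≤i≤n} (1 − t^{n−i} t_0 t_1). -/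
open scoped BigOperators
open Finset MeasureTheory

noncomputable section

/-- The infinite q-Pochhammer symbol `(x;q) = ∏_{j ≥ 0} (1 - q^j x)`. -/
def qPoch (x q : ℂ) : ℂ := ∏' j : ℕ, (1 - q ^ j * x)

/-- The finite q-Pochhammer symbol `(x;q)_k`. -/
def qPochFin (x q : ℂ) (k : ℕ) : ℂ := ∏ j ∈ Finset.range k, (1 - q ^ j * x)

/-- `(a z^{±1}; q) = (a z; q) (a z⁻¹; q)`. -/
def qPochPM (a z q : ℂ) : ℂ := qPoch (a * z) q * qPoch (a * z⁻¹) q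

/-- Normalized contour integral over the unit torus:
`∫_{T^n} F(z) ∏_i dz_i / (2 π √-1 z_i)`, parametrized by `z_i = exp(√-1 θ_i)`. -/
def torusAvg (n : ℕ) (F : (Fin n → ℂ) → ℂ) : ℂ :=
  ((2 * Real.pi : ℂ))⁻¹ ^ n *
    ∫ θ in Set.univ.pi fun _ : Fin n => Set.Ioc (0 : ℝ) (2 * Real.pi),
      F fun i => Complex.exp (Complex.I * (θ i : ℂ))

/-- The cross factor `(z w^{±1};q)(z⁻¹ w^{±1};q) / ((t z w^{±1};q)(t z⁻¹ w^{±1};q))`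
appearing in the Koornwinder density. -/
def koornCross (q t z w : ℂ) : ℂ :=
  (qPochPM z w q * qPochPM z⁻¹ w q) / (qPochPM (t * z) w q * qPochPM (t * z⁻¹) w q)

/-- The Koornwinder density `Δ^{(n)}(z; t₀,t₁,t₂,t₃; q,t)`. -/
def koornWeight (n : ℕ) (t0 t1 t2 t3 q t : ℂ) (z : Fin n → ℂ) : ℂ :=
  (∏ i, (qPoch ((z i) ^ 2) q * qPoch (((z i)⁻¹) ^ 2) q) /
      (qPochPM t0 (z i) q * qPochPM t1 (z i) q * qPochPM t2 (z i) q * qPochPM t3 (z i) q)) *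
  ∏ i, ∏ j, if i < j then koornCross q t (z i) (z j) else 1

/-- The (unnormalized) Koornwinder integral `⟨f⟩'^{(n)}_{t₀,t₁,t₂,t₃;q,t}`. -/
def koornInner' (n : ℕ) (t0 t1 t2 t3 q t : ℂ) (f : (Fin n → ℂ) → ℂ) : ℂ :=
  qPoch q q ^ n / (qPoch t q ^ n * 2 ^ n * (Nat.factorial n : ℂ)) *
    torusAvg n fun z => f z * koornWeight n t0 t1 t2 t3 q t z

/-- The normalized Koornwinder integral `⟨f⟩ = ⟨f⟩'/⟨1⟩'`. -/
def koornInner (n : ℕ) (t0 t1 t2 t3 q t : ℂ) (f : (Fin n → ℂ) → ℂ) : ℂ :=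
  koornInner' n t0 t1 t2 t3 q t f / koornInner' n t0 t1 t2 t3 q t fun _ => 1

/-- A function is a Laurent polynomial in `z₁, …, z_n` on nonzero arguments. -/
def IsLaurent (n : ℕ) (f : (Fin n → ℂ) → ℂ) : Prop :=
  ∃ c : (Fin n → ℤ) →₀ ℂ, ∀ z : Fin n → ℂ, (∀ i, z i ≠ 0) →
    f z = c.sum fun m a => a * ∏ i, z i ^ m i

/-- `BC_n`-symmetric Laurent polynomial: a Laurent polynomial invariant under permutations
of the variables and under each inversion `z_i ↦ z_i⁻¹`. -/
def IsBCSymmetric (n : ℕ) (f : (Fin n → ℂ) → ℂ) : Prop :=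
  IsLaurent n f ∧
  (∀ σ : Equiv.Perm (Fin n), ∀ z : Fin n → ℂ, (∀ i, z i ≠ 0) → f (z ∘ σ) = f z) ∧
  (∀ k : Fin n, ∀ z : Fin n → ℂ, (∀ i, z i ≠ 0) → f (Function.update z k (z k)⁻¹) = f z)

/-- The orbit of an exponent vector under signed permutations. -/
def signedOrbit (n : ℕ) (lam : Fin n → ℤ) : Finset (Fin n → ℤ) :=
  Finset.image
    (fun p : Equiv.Perm (Fin n) × (Fin n → Bool) =>
      fun i => if p.2 i then -lam (p.1 i) else lam (p.1 i))
    Finset.univ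

/-- The `BC_n`-symmetric monomial `m_λ`: the orbit sum of `∏ i, z_i^{λ_i}` under the
hyperoctahedral group. -/
def bcMono (n : ℕ) (lam : Fin n → ℤ) (z : Fin n → ℂ) : ℂ :=
  ∑ μ ∈ signedOrbit n lam, ∏ i, z i ^ μ i

/-- Natural-number exponent vectors coerced to integers. -/
def natToZ {n : ℕ} (lam : Fin n → ℕ) : Fin n → ℤ := fun i => (lam i : ℤ)

/-- `μ` is dominated by `λ`: all partial sums of `μ` are at most those of `λ`. -/
def Dominates {n : ℕ} (lam mu : Fin n → ℤ) : Prop :=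
  ∀ k : ℕ, (∑ i ∈ Finset.univ.filter fun i : Fin n => (i : ℕ) < k, mu i)
    ≤ ∑ i ∈ Finset.univ.filter fun i : Fin n => (i : ℕ) < k, lam i

/-- `μ` is strictly dominated by `λ`. -/
def StrictlyDominated {n : ℕ} (mu lam : Fin n → ℤ) : Prop :=
  Dominates lam mu ∧ mu ≠ lam

/-- A partition with at most `n` parts, recorded as a weakly decreasing vector. -/
def IsPartition {n : ℕ} (lam : Fin n → ℕ) : Prop := Antitone lam

/-- `K` is the Koornwinder polynomial `K^{(n)}_λ(·; t₀,t₁,t₂,t₃; q,t)`: a `BC_n`-symmetric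
Laurent polynomial of the form `m_λ` plus a combination of `m_μ` with `μ` strictly dominated
by `λ`, orthogonal to all strictly dominated monomials. -/
def IsKoornwinder (n : ℕ) (t0 t1 t2 t3 q t : ℂ) (lam : Fin n → ℕ)
    (K : (Fin n → ℂ) → ℂ) : Prop :=
  IsBCSymmetric n K ∧
  (∃ c : (Fin n → ℕ) →₀ ℂ,
    (∀ μ ∈ c.support, IsPartition μ ∧ StrictlyDominated (natToZ μ) (natToZ lam)) ∧
    ∀ z : Fin n → ℂ, (∀ i, z i ≠ 0) →
      K z = bcMono n (natToZ lam) z + c.sum fun μ a => a * bcMono n (natToZ μ) z) ∧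
  ∀ μ : Fin n → ℕ, IsPartition μ → StrictlyDominated (natToZ μ) (natToZ lam) →
    koornInner' n t0 t1 t2 t3 q t (fun z => K z * bcMono n (natToZ μ) z) = 0

/-- The principal specialization point `z_i = t^{n-i} a` (1-indexed). -/
def principalPt (n : ℕ) (t a : ℂ) : Fin n → ℂ := fun i => t ^ (n - 1 - (i : ℕ)) * a

/-- The normalized norm `N^{(n)}_λ` of a (candidate) Koornwinder polynomial. -/
def koornNorm (n : ℕ) (t0 t1 t2 t3 q t : ℂ) (K : (Fin n → ℂ) → ℂ) : ℂ :=
  koornInner n t0 t1 t2 t3 q t (fun z => K z * K z) / (K (principalPt n t t0)) ^ 2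

/-- Application of a sign vector: `z_i ↦ z_i⁻¹` where `ε_i` is true. -/
def signFlip {n : ℕ} (ε : Fin n → Bool) (z : Fin n → ℂ) : Fin n → ℂ :=
  fun i => if ε i then (z i)⁻¹ else z i

/-- The cross factor `∏_{i<j} (1 - t w_i w_j)/(1 - w_i w_j)`. -/
def crossFactor {n : ℕ} (t : ℂ) (w : Fin n → ℂ) : ℂ :=
  ∏ i, ∏ j, if i < j then (1 - t * w i * w j) / (1 - w i * w j) else 1

/-- Nondegeneracy conditions on `z` making all the difference-operator denominators nonzero. -/
def ZGood {n : ℕ} (z : Fin n → ℂ) : Prop :=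
  (∀ i, z i ≠ 0) ∧ (∀ i, (z i) ^ 2 ≠ 1) ∧
    ∀ i j : Fin n, i ≠ j → z i * z j ≠ 1 ∧ z i ≠ z j

/-- The lowering difference operator `D^{-(n)}_q(t)`, with `sq` a square root of `q`. -/
def Dminus (n : ℕ) (sq t : ℂ) (f : (Fin n → ℂ) → ℂ) (z : Fin n → ℂ) : ℂ :=
  ∑ ε : Fin n → Bool,
    (∏ i, signFlip ε z i / (1 - (signFlip ε z i) ^ 2)) *
      crossFactor t (signFlip ε z) * f fun i => sq * signFlip ε z i

/-- The difference operator `D^{(n)}_q(t₀,t₁;t)`, with `sq` a square root of `q`. -/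
def Dmid (n : ℕ) (sq t0 t1 t : ℂ) (f : (Fin n → ℂ) → ℂ) (z : Fin n → ℂ) : ℂ :=
  ∑ ε : Fin n → Bool,
    (∏ i, (1 - t0 * signFlip ε z i) * (1 - t1 * signFlip ε z i) / (1 - (signFlip ε z i) ^ 2)) *
      crossFactor t (signFlip ε z) * f fun i => sq * signFlip ε z i

/-- The raising difference operator `D^{+(n)}_q(t₀,t₁,t₂,t₃;t)`, with `sq` a square root of `q`. -/
def Dplus (n : ℕ) (sq t0 t1 t2 t3 t : ℂ) (f : (Fin n → ℂ) → ℂ) (z : Fin n → ℂ) : ℂ :=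
  ∑ ε : Fin n → Bool,
    (∏ i, (1 - t0 * signFlip ε z i) * (1 - t1 * signFlip ε z i) * (1 - t2 * signFlip ε z i) *
        (1 - t3 * signFlip ε z i) / (signFlip ε z i * (1 - (signFlip ε z i) ^ 2))) *
      crossFactor t (signFlip ε z) * f fun i => sq * signFlip ε z i

/-- The Gustafson-type integrand (without prefactor) with parameters `T_0, …, T_{N-1}`. -/
def gustafsonKernel (n N : ℕ) (q : ℂ) (T : Fin N → ℂ) (z : Fin n → ℂ) : ℂ :=
  (∏ i, ∏ j, if i < j then qPochPM (z i) (z j) q * qPochPM ((z i)⁻¹) (z j) q else 1) *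
    ∏ i, (qPoch ((z i) ^ 2) q * qPoch (((z i)⁻¹) ^ 2) q) / ∏ r, qPochPM (T r) (z i) q

/-- The density `κ(z)` of the integral operator `I^{*(n)}(q)`. -/
def IstarWeight (n N : ℕ) (q : ℂ) (T : Fin N → ℂ) (z : Fin n → ℂ) : ℂ :=
  (∏ r, ∏ s, if r < s then qPoch (T r * T s) q else 1) / qPoch (∏ r, T r) q *
    (qPoch q q ^ n / (2 ^ n * (Nat.factorial n : ℂ))) * gustafsonKernel n N q T z

/-- The integral operator `I^{*(n)}(q)` taking a `BC_n`-symmetric polynomial to a function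
of parameters `T_0, …, T_{N-1}` (with `N = 2n+2` in the main case). -/
def Istar (n N : ℕ) (q : ℂ) (f : (Fin n → ℂ) → ℂ) (T : Fin N → ℂ) : ℂ :=
  torusAvg n fun z => f z * IstarWeight n N q T z

/-- The integral operator `I^{+(n)}_t(q)`, with `st` a square root of `t`. -/
def Iplus (n : ℕ) (st q : ℂ) (f : (Fin n → ℂ) → ℂ) (z : Fin (n + 1) → ℂ) : ℂ :=
  Istar n (2 * n + 2) q f fun r =>
    if h : (r : ℕ) < n + 1 then st * z ⟨r, h⟩
    else st * (z ⟨(r : ℕ) - (n + 1), by have := r.isLt; omega⟩)⁻¹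

/-- The integral operator `I^{(n)}_t(t₀,t₁;q)`, with `st` a square root of `t`. -/
def Imid (n : ℕ) (st t0 t1 q : ℂ) (f : (Fin n → ℂ) → ℂ) (z : Fin n → ℂ) : ℂ :=
  Istar n (2 * n + 2) q f fun r =>
    if h0 : (r : ℕ) = 0 then t0
    else if h1 : (r : ℕ) = 1 then t1
    else if h : (r : ℕ) < n + 2 then st * z ⟨(r : ℕ) - 2, by omega⟩
    else st * (z ⟨(r : ℕ) - (n + 2), by have := r.isLt; omega⟩)⁻¹

/-- The integral operator `I^{-(n+1)}_t(t₀,t₁,t₂,t₃;q)` (input `BC_{n+1}`, output `BC_n`),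
with `st` a square root of `t`. -/
def Iminus (n : ℕ) (st t0 t1 t2 t3 q : ℂ) (f : (Fin (n + 1) → ℂ) → ℂ) (z : Fin n → ℂ) : ℂ :=
  Istar (n + 1) (2 * n + 4) q f fun r =>
    if h0 : (r : ℕ) = 0 then t0
    else if h1 : (r : ℕ) = 1 then t1
    else if h2 : (r : ℕ) = 2 then t2
    else if h3 : (r : ℕ) = 3 then t3
    else if h : (r : ℕ) < n + 4 then st * z ⟨(r : ℕ) - 4, by omega⟩
    else st * (z ⟨(r : ℕ) - (n + 4), by have := r.isLt; omega⟩)⁻¹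

/-- The conjugate partition: `conjPart λ i = λ'_i = #{j : λ_j ≥ i}` (for `i ≥ 1`). -/
def conjPart {n : ℕ} (lam : Fin n → ℕ) (i : ℕ) : ℕ :=
  (Finset.univ.filter fun j : Fin n => i ≤ lam j).card

/-- A partition with at most `n` parts viewed as one with at most `n+1` parts. -/
def padPart {n : ℕ} (lam : Fin n → ℕ) : Fin (n + 1) → ℕ :=
  fun i => if h : (i : ℕ) < n then lam ⟨i, h⟩ else 0

/-- The first `n` parts of a partition with at most `n+1` parts. -/
def truncPart {n : ℕ} (lam : Fin (n + 1) → ℕ) : Fin n → ℕ :=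
  fun i => lam i.castSucc

/-- The complementary partition `n^m - λ'` of `λ ⊆ m^n` inside the `m × n` box. -/
def boxCompl {n : ℕ} (m : ℕ) (lam : Fin n → ℕ) : Fin m → ℕ :=
  fun j => n - conjPart lam (m - (j : ℕ))

/-- The interaction kernel `∏_{i,j} (y_j + y_j⁻¹ - z_i - z_i⁻¹)`. -/
def interactionKernel (n m : ℕ) (z : Fin n → ℂ) (y : Fin m → ℂ) : ℂ :=
  ∏ i : Fin n, ∏ j : Fin m, (y j + (y j)⁻¹ - z i - (z i)⁻¹)

/-- The multivariate q-symbol `C⁰_λ(x;q,t)`. -/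
def C0 {n : ℕ} (lam : Fin n → ℕ) (x q t : ℂ) : ℂ :=
  ∏ i : Fin n, qPochFin (t⁻¹ ^ (i : ℕ) * x) q (lam i)

/-- The multivariate q-symbol `C⁻_λ(x;q,t)`. -/
def Cminus {n : ℕ} (lam : Fin n → ℕ) (x q t : ℂ) : ℂ :=
  ∏ i : Fin n, ∏ j : Fin n, if i ≤ j then
      qPochFin (t ^ ((j : ℕ) - (i : ℕ)) * x) q
          (lam i - (if h : (j : ℕ) + 1 < n then lam ⟨(j : ℕ) + 1, h⟩ else 0)) /
        qPochFin (t ^ ((j : ℕ) - (i : ℕ)) * x) q (lam i - lam j)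
    else 1

/-- The multivariate q-symbol `C⁺_λ(x;q,t)`. -/
def Cplus {n : ℕ} (lam : Fin n → ℕ) (x q t : ℂ) : ℂ :=
  ∏ i : Fin n, ∏ j : Fin n, if i ≤ j then
      qPochFin (t⁻¹ ^ ((i : ℕ) + (j : ℕ)) * x) q (lam i + lam j) /
        qPochFin (t⁻¹ ^ ((i : ℕ) + (j : ℕ)) * x) q
          (lam i + (if h : (j : ℕ) + 1 < n then lam ⟨(j : ℕ) + 1, h⟩ else 0))
    else 1

/-- `n(λ) = ∑ (i-1) λ_i`. -/
def nStat {n : ℕ} (lam : Fin n → ℕ) : ℕ := ∑ i : Fin n, (i : ℕ) * lam i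

/-- The symbol `Δ_λ(a | b₁, b₂, b₃, b₄; q, t)`. -/
def DeltaSym {n : ℕ} (lam : Fin n → ℕ) (a b1 b2 b3 b4 q t : ℂ) : ℂ :=
  ((q * a) ^ 2 / (b1 * b2 * b3 * b4)) ^ (∑ i, lam i) *
    (C0 lam b1 q t * C0 lam b2 q t * C0 lam b3 q t * C0 lam b4 q t) /
    (C0 lam (q * a / b1) q t * C0 lam (q * a / b2) q t * C0 lam (q * a / b3) q t *
      C0 lam (q * a / b4) q t) *
  (t ^ (2 * nStat lam) * (t / (q * a)) ^ (∑ i, lam i) *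
      (∏ i : Fin n, qPochFin (t⁻¹ ^ (2 * (i : ℕ)) * (q * a)) q (2 * lam i) *
        qPochFin (t⁻¹ ^ (2 * (i : ℕ) + 1) * (q * a)) q (2 * lam i)) /
    (Cminus lam q q t * Cminus lam t q t * Cplus lam a q t * Cplus lam (q * a / t) q t))

end

noncomputable section
namespace NL

def Dl (t0 t1 x : ℂ) : ℂ := (1 - t0 * x) * (1 - t1 * x) / (1 - x ^ 2)
def Cf (t a b : ℂ) : ℂ := (1 - t * a * b) / (1 - a * b)
def gee (t t0 t1 : ℂ) {m : ℕ} (w : Fin m → ℂ) (x : ℂ) : ℂ :=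
  Dl t0 t1 x * ∏ j, Cf t (w j) x
def rsd (t t0 t1 : ℂ) {m : ℕ} (w : Fin m → ℂ) (j : Fin m) : ℂ :=
  -(1 - t) / w j * Dl t0 t1 (w j)⁻¹ * ∏ k, if k = j then 1 else Cf t (w k) (w j)⁻¹

def WGood {m : ℕ} (w : Fin m → ℂ) : Prop :=
  (∀ j, w j ≠ 0) ∧ (∀ j, w j ^ 2 ≠ 1) ∧ ∀ j k, j ≠ k → w j ≠ w k ∧ w j * w k ≠ 1

lemma sub_one_ne (x : ℂ) (hx : x ^ 2 ≠ 1) : x - 1 ≠ 0 :=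
  fun h => hx (by linear_combination (x + 1) * h)
lemma add_one_ne (x : ℂ) (hx : x ^ 2 ≠ 1) : x + 1 ≠ 0 :=
  fun h => hx (by linear_combination (x - 1) * h)

lemma Cf_comm (t a b : ℂ) : Cf t a b = Cf t b a := by
  unfold Cf; ring_nf

lemma key1 (t u x : ℂ) (hu : u ≠ 0) (hux : u * x ≠ 1) :
    Cf t u x = t + (-(1 - t) / u) / (x - u⁻¹) := by
  have h2 : 1 - u * x ≠ 0 := sub_ne_zero.2 (Ne.symm hux)
  have e2 : x - u⁻¹ = (u * x - 1) / u := by field_simp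
  rw [e2]
  have h2' : u * x - 1 ≠ 0 := fun h => hux (by linear_combination h)
  unfold Cf; field_simp; ring

lemma key2 (t u x p : ℂ) (hu : u ≠ 0) (hux : u * x ≠ 1) (hup : u * p ≠ 1) (hxp : x ≠ p) :
    Cf t u x / (x - p) = Cf t u p / (x - p) + (-(1 - t) / u / (u⁻¹ - p)) / (x - u⁻¹) := by
  have h1 : x - p ≠ 0 := sub_ne_zero.2 hxp
  have h2 : 1 - u * x ≠ 0 := sub_ne_zero.2 (Ne.symm hux)
  have h3 : 1 - u * p ≠ 0 := sub_ne_zero.2 (Ne.symm hup)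
  have e1 : u⁻¹ - p = (1 - u * p) / u := by field_simp
  have e2 : x - u⁻¹ = (u * x - 1) / u := by field_simp
  rw [e1, e2]
  have h2' : u * x - 1 ≠ 0 := fun h => hux (by linear_combination h)
  unfold Cf; field_simp; ring

lemma lemB (t t0 t1 : ℂ) :
    ∀ (m : ℕ) (w : Fin m → ℂ), WGood w → ∀ x : ℂ, x ^ 2 ≠ 1 → (∀ j, w j * x ≠ 1) →
    gee t t0 t1 w x =
      -(t0 * t1 * t ^ m)
      + (-((1 - t0) * (1 - t1)) / 2 * ∏ k, Cf t (w k) 1) / (x - 1)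
      + ((1 + t0) * (1 + t1) / 2 * ∏ k, Cf t (w k) (-1)) / (x + 1)
      + ∑ j, rsd t t0 t1 w j / (x - (w j)⁻¹) := by
  intro m
  induction m with
  | zero =>
    intro w _ x hx _
    have hx1 : x - 1 ≠ 0 := sub_one_ne x hx
    have hx2 : x + 1 ≠ 0 := add_one_ne x hx
    have hd : 1 - x ^ 2 ≠ 0 := fun h => hx (by linear_combination -h)
    simp only [Finset.univ_eq_empty, Finset.prod_empty, Finset.sum_empty, pow_zero, gee, Dl]
    field_simp
    ring
  | succ m IH =>
    intro w hw x hx hxw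
    have hu0 : w (Fin.last m) ≠ 0 := hw.1 _
    have hu2 : w (Fin.last m) ^ 2 ≠ 1 := hw.2.1 _
    have hne : ∀ j : Fin m, w j.castSucc ≠ w (Fin.last m) ∧ w j.castSucc * w (Fin.last m) ≠ 1 :=
      fun j => hw.2.2 _ _ (Fin.castSucc_lt_last j).ne
    have hw'good : WGood (fun j : Fin m => w j.castSucc) := by
      refine ⟨fun j => hw.1 _, fun j => hw.2.1 _, fun j k hjk => hw.2.2 _ _ ?_⟩
      simpa [Fin.castSucc_inj] using hjk
    have IHx := IH (fun j => w j.castSucc) hw'good x hx (fun j => hxw j.castSucc)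
    have hui2 : ((w (Fin.last m))⁻¹) ^ 2 ≠ 1 := by
      rw [inv_pow]; exact fun h => hu2 (by rwa [inv_eq_one] at h)
    have hwu : ∀ j : Fin m, (fun j : Fin m => w j.castSucc) j * (w (Fin.last m))⁻¹ ≠ 1 := by
      intro j; show w j.castSucc * (w (Fin.last m))⁻¹ ≠ 1
      exact fun h => (hne j).1 ((mul_inv_eq_one₀ hu0).mp h)
    have IHu := IH (fun j => w j.castSucc) hw'good (w (Fin.last m))⁻¹ hui2 hwu
    beta_reduce at IHx IHu
    have hu_x : w (Fin.last m) * x ≠ 1 := hxw _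
    have hgee : gee t t0 t1 w x = gee t t0 t1 (fun j => w j.castSucc) x * Cf t (w (Fin.last m)) x := by
      unfold gee; rw [Fin.prod_univ_castSucc]; ring
    have hrsdc : ∀ j : Fin m, rsd t t0 t1 w j.castSucc
        = rsd t t0 t1 (fun j => w j.castSucc) j * Cf t (w (Fin.last m)) (w j.castSucc)⁻¹ := by
      intro j
      unfold rsd
      rw [Fin.prod_univ_castSucc]
      have hlast : ¬ (Fin.last m = j.castSucc) := (Fin.castSucc_lt_last j).ne'
      simp only [Fin.castSucc_inj, if_neg hlast]
      ring
    have hrsdl : rsd t t0 t1 w (Fin.last m)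
        = -(1 - t) / w (Fin.last m) * gee t t0 t1 (fun j => w j.castSucc) (w (Fin.last m))⁻¹ := by
      unfold rsd gee
      rw [Fin.prod_univ_castSucc]
      simp only [show ∀ k : Fin m, (k.castSucc = Fin.last m) = False from
        fun k => eq_false (Fin.castSucc_lt_last k).ne, if_false, eq_self_iff_true, if_true]
      ring
    have e2 : ∀ (A p : ℂ), w (Fin.last m) * p ≠ 1 → x ≠ p →
        A / (x - p) * Cf t (w (Fin.last m)) x
        = A * Cf t (w (Fin.last m)) p / (x - p)
          + -(1 - t) / w (Fin.last m) * (A / ((w (Fin.last m))⁻¹ - p))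
            / (x - (w (Fin.last m))⁻¹) := by
      intro A p hup hxp
      have hk := key2 t (w (Fin.last m)) x p hu0 hu_x hup hxp
      calc A / (x - p) * Cf t (w (Fin.last m)) x
          = A * (Cf t (w (Fin.last m)) x / (x - p)) := by ring
        _ = A * (Cf t (w (Fin.last m)) p / (x - p)
              + -(1 - t) / w (Fin.last m) / ((w (Fin.last m))⁻¹ - p)
                / (x - (w (Fin.last m))⁻¹)) := by rw [hk]
        _ = _ := by ring
    have e1 : ∀ j : Fin m,
        rsd t t0 t1 (fun j => w j.castSucc) j / (x - (w j.castSucc)⁻¹) * Cf t (w (Fin.last m)) x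
        = rsd t t0 t1 (fun j => w j.castSucc) j * Cf t (w (Fin.last m)) (w j.castSucc)⁻¹ / (x - (w j.castSucc)⁻¹)
          + -(1 - t) / w (Fin.last m)
            * (rsd t t0 t1 (fun j => w j.castSucc) j / ((w (Fin.last m))⁻¹ - (w j.castSucc)⁻¹))
            / (x - (w (Fin.last m))⁻¹) := by
      intro j
      have hup : w (Fin.last m) * (w j.castSucc)⁻¹ ≠ 1 :=
        fun h => (hne j).1 (((mul_inv_eq_one₀ (hw.1 _)).mp h).symm)
      have hxp : x ≠ (w j.castSucc)⁻¹ :=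
        fun h => hxw j.castSucc (by rw [h, mul_inv_cancel₀ (hw.1 _)])
      exact e2 _ _ hup hxp
    have hS : (∑ j : Fin m, rsd t t0 t1 (fun j => w j.castSucc) j / (x - (w j.castSucc)⁻¹))
          * Cf t (w (Fin.last m)) x
        = (∑ j : Fin m, rsd t t0 t1 (fun j => w j.castSucc) j
            * Cf t (w (Fin.last m)) (w j.castSucc)⁻¹ / (x - (w j.castSucc)⁻¹))
          + -(1 - t) / w (Fin.last m)
            * (∑ j : Fin m, rsd t t0 t1 (fun j => w j.castSucc) j
                / ((w (Fin.last m))⁻¹ - (w j.castSucc)⁻¹))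
            / (x - (w (Fin.last m))⁻¹) := by
      rw [Finset.sum_mul, Finset.sum_congr rfl (fun j _ => e1 j), Finset.sum_add_distrib]
      congr 1
      rw [Finset.mul_sum, Finset.sum_div]
    have hK := key1 t (w (Fin.last m)) x hu0 hu_x
    rw [hgee, IHx]
    simp only [Fin.prod_univ_castSucc, Fin.sum_univ_castSucc, pow_succ]
    simp only [hrsdc, hrsdl, IHu]
    have hu1 : w (Fin.last m) * 1 ≠ 1 := by
      rw [mul_one]; exact fun h => hu2 (by rw [h]; norm_num)
    have hum1 : w (Fin.last m) * (-1) ≠ 1 := fun h => hu2 (by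
      have h' : w (Fin.last m) = -1 := by linear_combination -h
      rw [h']; norm_num)
    have hx1 : x ≠ 1 := fun h => hx (by rw [h]; norm_num)
    have hxm1 : x ≠ -1 := fun h => hx (by rw [h]; norm_num)
    simp only [show x + 1 = x - -1 from by ring]
    rw [add_mul, add_mul, add_mul, hS,
      e2 (-((1 - t0) * (1 - t1)) / 2 * ∏ k : Fin m, Cf t (w k.castSucc) 1) 1 hu1 hx1,
      e2 ((1 + t0) * (1 + t1) / 2 * ∏ k : Fin m, Cf t (w k.castSucc) (-1)) (-1) hum1 hxm1,
      hK]
    ring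

lemma lemC (t t0 t1 : ℂ) (m : ℕ) (w : Fin m → ℂ) (hw : WGood w) (x : ℂ)
    (hx0 : x ≠ 0) (hx : x ^ 2 ≠ 1) (hxw : ∀ j, w j * x ≠ 1) (hxw' : ∀ j, w j ≠ x) :
    gee t t0 t1 w x + gee t t0 t1 w x⁻¹
      = 1 - t0 * t1 * t ^ m
        + ∑ j, rsd t t0 t1 w j * (w j + 1 / (x - (w j)⁻¹) + 1 / (x⁻¹ - (w j)⁻¹)) := by
  have hx1 : x ≠ 1 := fun h => hx (by rw [h]; norm_num)
  have hxm1 : x ≠ -1 := fun h => hx (by rw [h]; norm_num)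
  have hBx := lemB t t0 t1 m w hw x hx hxw
  have hxi2 : (x⁻¹) ^ 2 ≠ 1 := by
    rw [inv_pow]; exact fun h => hx (by rwa [inv_eq_one] at h)
  have hBxi := lemB t t0 t1 m w hw x⁻¹
    hxi2 (fun j => fun h => hxw' j ((mul_inv_eq_one₀ hx0).mp h))
  have hB0 := lemB t t0 t1 m w hw 0 (by norm_num) (fun j => by norm_num)
  have hg0 : gee t t0 t1 w 0 = 1 := by simp [gee, Dl, Cf]
  rw [hg0] at hB0
  have hsum0 : ∑ j, rsd t t0 t1 w j / ((0 : ℂ) - (w j)⁻¹) = -∑ j, rsd t t0 t1 w j * w j := by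
    rw [← Finset.sum_neg_distrib]
    refine Finset.sum_congr rfl fun j _ => ?_
    rw [zero_sub, div_neg, div_inv_eq_mul]
  rw [hsum0] at hB0
  have hexp : ∑ j, rsd t t0 t1 w j * (w j + 1 / (x - (w j)⁻¹) + 1 / (x⁻¹ - (w j)⁻¹))
      = (∑ j, rsd t t0 t1 w j * w j) + (∑ j, rsd t t0 t1 w j / (x - (w j)⁻¹))
        + ∑ j, rsd t t0 t1 w j / (x⁻¹ - (w j)⁻¹) := by
    rw [← Finset.sum_add_distrib, ← Finset.sum_add_distrib]
    exact Finset.sum_congr rfl fun j _ => by ring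
  have q1 : 1 / (x - 1) + 1 / (x⁻¹ - 1) = -1 := by
    have h1 : x - 1 ≠ 0 := sub_ne_zero.2 hx1
    have h3 : 1 - x ≠ 0 := fun h => hx1 (by linear_combination -h)
    have h2 : x⁻¹ - 1 = (1 - x) / x := by field_simp
    rw [h2, one_div_div]
    field_simp
    ring
  have q2 : 1 / (x + 1) + 1 / (x⁻¹ + 1) = 1 := by
    have h1 : x + 1 ≠ 0 := add_one_ne x hx
    have h3 : 1 + x ≠ 0 := fun h => h1 (by linear_combination h)
    have h2 : x⁻¹ + 1 = (1 + x) / x := by field_simp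
    rw [h2, one_div_div]
    field_simp
    ring
  rw [hexp, hBx, hBxi]
  linear_combination (-1 : ℂ) * hB0 + (-((1 - t0) * (1 - t1)) / 2 * ∏ k, Cf t (w k) 1) * q1
    + ((1 + t0) * (1 + t1) / 2 * ∏ k, Cf t (w k) (-1)) * q2

def Rrest (t : ℂ) {m : ℕ} (w : Fin m → ℂ) (j : Fin m) : ℂ :=
  ∏ i, ∏ l, if i < l ∧ i ≠ j ∧ l ≠ j then (1 - t * w i * w l) / (1 - w i * w l) else 1

lemma prod_ite_erase {M : Type*} [CommMonoid M] {m : ℕ} (f : Fin m → M) (j : Fin m) :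
    ∏ i, (if i = j then 1 else f i) = ∏ i ∈ Finset.univ.erase j, f i := by
  calc ∏ i, (if i = j then 1 else f i)
      = ∏ i ∈ Finset.univ.erase j, (if i = j then 1 else f i) := by
        refine (Finset.prod_subset (Finset.subset_univ _) fun x _ hx => ?_).symm
        have hxj : x = j := by
          by_contra hne
          exact hx (Finset.mem_erase.2 ⟨hne, Finset.mem_univ x⟩)
        simp [hxj]
    _ = ∏ i ∈ Finset.univ.erase j, f i :=
        Finset.prod_congr rfl fun i hi => if_neg (Finset.ne_of_mem_erase hi)

lemma cross_extract (t : ℂ) {m : ℕ} (w : Fin m → ℂ) (j : Fin m) :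
    crossFactor t w = (∏ k, if k = j then 1 else Cf t (w k) (w j)) * Rrest t w j := by
  unfold crossFactor Rrest
  have h1 : ∀ i l : Fin m, (if i < l then (1 - t * w i * w l) / (1 - w i * w l) else 1)
      = (if i < l ∧ (i = j ∨ l = j) then (1 - t * w i * w l) / (1 - w i * w l) else 1)
        * (if i < l ∧ i ≠ j ∧ l ≠ j then (1 - t * w i * w l) / (1 - w i * w l) else 1) := by
    intro i l
    by_cases hil : i < l
    · by_cases hij : i = j
      · by_cases hlj : l = j
        · rw [hij, hlj] at hil; exact absurd hil (lt_irrefl j)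
        · simp [hil, hij, hlj]
      · by_cases hlj : l = j <;> simp [hil, hij, hlj]
    · simp [hil]
  simp only [h1, Finset.prod_mul_distrib]
  congr 1
  -- LHS: ∏ i, ∏ l, ite (i<l ∧ (i=j ∨ l=j)) .. 1
  rw [← Finset.mul_prod_erase Finset.univ _ (Finset.mem_univ j)]
  have h2 : ∀ i : Fin m, i ≠ j →
      (∏ l, if i < l ∧ (i = j ∨ l = j) then (1 - t * w i * w l) / (1 - w i * w l) else 1)
      = if i < j then (1 - t * w i * w j) / (1 - w i * w j) else 1 := by
    intro i hij
    rw [Finset.prod_eq_single j]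
    · simp [hij]
    · intro l _ hlj; simp [hij, hlj]
    · simp
  have h3 : (∏ l, if j < l ∧ (j = j ∨ l = j) then (1 - t * w j * w l) / (1 - w j * w l) else 1)
      = ∏ l ∈ Finset.univ.erase j, if j < l then (1 - t * w j * w l) / (1 - w j * w l) else 1 := by
    rw [← Finset.mul_prod_erase Finset.univ _ (Finset.mem_univ j)]
    simp only [lt_irrefl, false_and, if_false, one_mul]
    exact Finset.prod_congr rfl fun l hl => by
      by_cases h : j < l <;> simp [h]
  rw [h3, Finset.prod_congr rfl (fun i hi => h2 i (Finset.ne_of_mem_erase hi)),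
    prod_ite_erase (fun k => Cf t (w k) (w j)) j, ← Finset.prod_mul_distrib]
  refine Finset.prod_congr rfl fun k hk => ?_
  have hkj : k ≠ j := Finset.ne_of_mem_erase hk
  rcases lt_or_gt_of_ne hkj with h | h
  · simp [h, not_lt_of_gt h, Cf]
  · have : ¬ k < j := not_lt_of_gt h
    simp only [if_pos h, if_neg this, mul_one]
    rw [Cf_comm]; rfl

lemma keychi (a x : ℂ) (ha : a ≠ 0) (hx0 : x ≠ 0) (hax : a * x ≠ 1) (hne : a ≠ x) :
    (a + 1 / (x - a⁻¹) + 1 / (x⁻¹ - a⁻¹)) / a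
      + a * (a⁻¹ + 1 / (x - a) + 1 / (x⁻¹ - a)) = 0 := by
  have h1 : x - a⁻¹ ≠ 0 := sub_ne_zero.2 (fun h => hax (by rw [h, mul_inv_cancel₀ ha]))
  have h2 : x⁻¹ - a⁻¹ ≠ 0 := sub_ne_zero.2 (fun h => hne (inv_injective h).symm)
  have h3 : x - a ≠ 0 := sub_ne_zero.2 (Ne.symm hne)
  have h4 : x⁻¹ - a ≠ 0 := sub_ne_zero.2 (fun h => hax (by rw [← h, inv_mul_cancel₀ hx0]))
  have e1 : x - a⁻¹ = (a * x - 1) / a := by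
    rw [eq_div_iff ha, sub_mul, inv_mul_cancel₀ ha]
    ring
  have e2 : x⁻¹ - a⁻¹ = (a - x) / (x * a) := inv_sub_inv hx0 ha
  have e3 : x⁻¹ - a = (1 - a * x) / x := by
    rw [eq_div_iff hx0, sub_mul, inv_mul_cancel₀ hx0]
  have hax1 : a * x - 1 ≠ 0 := fun h => hax (by linear_combination h)
  have hax2 : 1 - a * x ≠ 0 := fun h => hax (by linear_combination -h)
  have hax3 : a - x ≠ 0 := sub_ne_zero.2 hne
  rw [e1, e2, e3, one_div_div, one_div_div, one_div_div]
  field_simp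
  ring

lemma prod_extract {M : Type*} [CommMonoid M] {m : ℕ} (g : Fin m → M) (j : Fin m) :
    ∏ i, g i = g j * ∏ i, (if i = j then 1 else g i) := by
  rw [prod_ite_erase, Finset.mul_prod_erase _ _ (Finset.mem_univ j)]

lemma lemD (t t0 t1 : ℂ) {m : ℕ} (w : Fin m → ℂ) (j : Fin m) (hw : WGood w) (x : ℂ)
    (hx0 : x ≠ 0) (hax : w j * x ≠ 1) (hne : w j ≠ x) :
    (∏ i, Dl t0 t1 (w i)) * crossFactor t w * rsd t t0 t1 w j
      * (w j + 1 / (x - (w j)⁻¹) + 1 / (x⁻¹ - (w j)⁻¹))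
    + (∏ i, Dl t0 t1 (Function.update w j (w j)⁻¹ i))
      * crossFactor t (Function.update w j (w j)⁻¹)
      * rsd t t0 t1 (Function.update w j (w j)⁻¹) j
      * ((w j)⁻¹ + 1 / (x - w j) + 1 / (x⁻¹ - w j)) = 0 := by
  have ha : w j ≠ 0 := hw.1 j
  have hDw : ∏ i, Dl t0 t1 (w i)
      = Dl t0 t1 (w j) * ∏ i, (if i = j then 1 else Dl t0 t1 (w i)) :=
    prod_extract _ j
  have hDw' : ∏ i, Dl t0 t1 (Function.update w j (w j)⁻¹ i)
      = Dl t0 t1 ((w j)⁻¹) * ∏ i, (if i = j then 1 else Dl t0 t1 (w i)) := by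
    rw [prod_extract (fun i => Dl t0 t1 (Function.update w j (w j)⁻¹ i)) j,
      Function.update_self]
    congr 1
    exact Finset.prod_congr rfl fun k _ => by
      by_cases hk : k = j <;> simp [hk, Function.update_of_ne]
  have hCw : crossFactor t w
      = (∏ k, if k = j then 1 else Cf t (w k) (w j)) * Rrest t w j := cross_extract t w j
  have hCw' : crossFactor t (Function.update w j (w j)⁻¹)
      = (∏ k, if k = j then 1 else Cf t (w k) ((w j)⁻¹)) * Rrest t w j := by
    rw [cross_extract t _ j]
    congr 1
    · exact Finset.prod_congr rfl fun k _ => by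
        by_cases hk : k = j <;> simp [hk, Function.update_self, Function.update_of_ne]
    · unfold Rrest
      refine Finset.prod_congr rfl fun i _ => Finset.prod_congr rfl fun l _ => ?_
      by_cases h : i < l ∧ i ≠ j ∧ l ≠ j
      · simp only [if_pos h, Function.update_of_ne h.2.1, Function.update_of_ne h.2.2]
      · simp [h]
  have hrw : rsd t t0 t1 w j
      = -(1 - t) / w j * Dl t0 t1 (w j)⁻¹
        * ∏ k, (if k = j then 1 else Cf t (w k) (w j)⁻¹) := rfl
  have hrw' : rsd t t0 t1 (Function.update w j (w j)⁻¹) j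
      = -(1 - t) * w j * Dl t0 t1 (w j)
        * ∏ k, (if k = j then 1 else Cf t (w k) (w j)) := by
    unfold rsd
    rw [Function.update_self, inv_inv]
    congr 1
    · rw [div_inv_eq_mul]
    · exact Finset.prod_congr rfl fun k _ => by
        by_cases hk : k = j <;> simp [hk, Function.update_of_ne]
  rw [hDw, hDw', hCw, hCw', hrw, hrw']
  have hkey := keychi (w j) x ha hx0 hax hne
  linear_combination (-(1 - t) * (∏ i, (if i = j then 1 else Dl t0 t1 (w i)))
    * Rrest t w j * (∏ k, (if k = j then 1 else Cf t (w k) (w j)))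
    * (∏ k, (if k = j then 1 else Cf t (w k) (w j)⁻¹))
    * Dl t0 t1 (w j) * Dl t0 t1 (w j)⁻¹) * hkey

lemma inv_inv_ne_one (a b : ℂ) (hab : a * b ≠ 1) : a⁻¹ * b⁻¹ ≠ 1 := by
  intro h
  apply hab
  have h2 : (a * b)⁻¹ = 1 := by rw [mul_inv]; exact h
  rwa [inv_eq_one] at h2

lemma main_aux : ∀ (n : ℕ) (t t0 t1 : ℂ) (z : Fin n → ℂ), ZGood z →
    (∑ ε : Fin n → Bool,
      (∏ i, (1 - t0 * signFlip ε z i) * (1 - t1 * signFlip ε z i) /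
          (1 - (signFlip ε z i) ^ 2)) *
        crossFactor t (signFlip ε z))
    = ∏ i : Fin n, (1 - t ^ (n - 1 - (i : ℕ)) * t0 * t1) := by
  intro n
  induction n with
  | zero =>
    intro t t0 t1 z hz
    simp [crossFactor]
  | succ n IH =>
    intro t t0 t1 z hz
    obtain ⟨hz0, hz2, hzp⟩ := hz
    have hDl : ∀ x : ℂ, (1 - t0 * x) * (1 - t1 * x) / (1 - x ^ 2) = Dl t0 t1 x := fun _ => rfl
    simp only [hDl]
    have hy : ZGood (fun j : Fin n => z j.succ) :=
      ⟨fun j => hz0 _, fun j => hz2 _,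
        fun j k hjk => hzp _ _ (fun h => hjk (Fin.succ_injective n h))⟩
    have hW0 : ∀ (ε' : Fin n → Bool) (j : Fin n), signFlip ε' (fun j => z j.succ) j ≠ 0 := by
      intro ε' j; unfold signFlip; beta_reduce; split_ifs
      · exact inv_ne_zero (hz0 _)
      · exact hz0 _
    have hW2 : ∀ (ε' : Fin n → Bool) (j : Fin n),
        (signFlip ε' (fun j => z j.succ) j) ^ 2 ≠ 1 := by
      intro ε' j; unfold signFlip; beta_reduce; split_ifs
      · rw [inv_pow]; exact fun h => hz2 j.succ (by rwa [inv_eq_one] at h)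
      · exact hz2 _
    have hWp : ∀ (ε' : Fin n → Bool) (j k : Fin n), j ≠ k →
        signFlip ε' (fun j => z j.succ) j ≠ signFlip ε' (fun j => z j.succ) k ∧
        signFlip ε' (fun j => z j.succ) j * signFlip ε' (fun j => z j.succ) k ≠ 1 := by
      intro ε' j k hjk
      have hsk : j.succ ≠ k.succ := fun h => hjk (Fin.succ_injective n h)
      obtain ⟨hab, hne⟩ := hzp j.succ k.succ hsk
      have ha := hz0 j.succ; have hb := hz0 k.succ
      unfold signFlip
      beta_reduce
      split_ifs with h1 h2 h2
      · exact ⟨fun h => hne (inv_injective h), inv_inv_ne_one _ _ hab⟩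
      · exact ⟨fun h => hab (by rw [← h, mul_inv_cancel₀ ha]),
          fun h => hne ((inv_mul_eq_one₀ ha).mp h)⟩
      · exact ⟨fun h => hab (by rw [h, inv_mul_cancel₀ hb]),
          fun h => hne ((mul_inv_eq_one₀ hb).mp h)⟩
      · exact ⟨hne, hab⟩
    have hWx : ∀ (ε' : Fin n → Bool) (j : Fin n),
        signFlip ε' (fun j => z j.succ) j * z 0 ≠ 1 ∧
        signFlip ε' (fun j => z j.succ) j ≠ z 0 := by
      intro ε' j
      have hs0 : j.succ ≠ 0 := Fin.succ_ne_zero j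
      obtain ⟨hab, hne⟩ := hzp j.succ 0 hs0
      have ha := hz0 j.succ
      unfold signFlip
      beta_reduce
      split_ifs with h
      · exact ⟨fun h' => hne ((inv_mul_eq_one₀ ha).mp h'),
          fun h' => hab (by rw [← h', mul_inv_cancel₀ ha])⟩
      · exact ⟨hab, hne⟩
    rw [← Equiv.sum_comp (Fin.consEquiv (fun _ : Fin (n+1) => Bool))
        (fun ε => (∏ i, Dl t0 t1 (signFlip ε z i)) * crossFactor t (signFlip ε z)),
      Fintype.sum_prod_type]
    have hsf : ∀ (b : Bool) (ε' : Fin n → Bool),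
        signFlip (Fin.cons b ε') z
        = Fin.cons (if b then (z 0)⁻¹ else z 0) (signFlip ε' (fun j => z j.succ)) := by
      intro b ε'; funext i
      refine Fin.cases ?_ (fun i => ?_) i
      · simp [signFlip, Fin.cons_zero]
      · simp [signFlip, Fin.cons_succ]
    have hDlprod : ∀ (x : ℂ) (W : Fin n → ℂ),
        (∏ i : Fin (n+1), Dl t0 t1 ((Fin.cons x W : Fin (n+1) → ℂ) i))
          = Dl t0 t1 x * ∏ i, Dl t0 t1 (W i) := by
      intro x W; rw [Fin.prod_univ_succ]; simp
    have hcross : ∀ (x : ℂ) (W : Fin n → ℂ),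
        crossFactor t (Fin.cons x W : Fin (n+1) → ℂ)
          = (∏ l, Cf t (W l) x) * crossFactor t W := by
      intro x W
      unfold crossFactor
      rw [Fin.prod_univ_succ]
      congr 1
      · rw [Fin.prod_univ_succ]
        simp only [Fin.cons_zero, Fin.cons_succ, lt_self_iff_false, if_false, one_mul,
          Fin.succ_pos, if_true]
        exact Finset.prod_congr rfl fun l _ => by rw [Cf_comm]; rfl
      · refine Finset.prod_congr rfl fun i _ => ?_
        rw [Fin.prod_univ_succ]
        simp only [Fin.cons_succ, Fin.cons_zero, Fin.not_lt_zero, if_false, one_mul,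
          Fin.succ_lt_succ_iff]
    have hterm : ∀ (b : Bool) (ε' : Fin n → Bool),
        (∏ i, Dl t0 t1 (signFlip (Fin.cons b ε') z i))
          * crossFactor t (signFlip (Fin.cons b ε') z)
        = ((∏ i, Dl t0 t1 (signFlip ε' (fun j => z j.succ) i))
            * crossFactor t (signFlip ε' (fun j => z j.succ)))
          * gee t t0 t1 (signFlip ε' (fun j => z j.succ)) (if b then (z 0)⁻¹ else z 0) := by
      intro b ε'
      rw [hsf b ε', hDlprod, hcross]
      unfold gee
      ring
    have hconseq : ∀ (b : Bool) (ε' : Fin n → Bool),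
        (Fin.consEquiv (fun _ : Fin (n+1) => Bool)) (b, ε') = Fin.cons b ε' := fun _ _ => rfl
    simp only [hconseq]
    rw [Fintype.sum_bool]
    rw [← Finset.sum_add_distrib]
    have hper : ∀ ε' : Fin n → Bool,
        (∏ i, Dl t0 t1 (signFlip (Fin.cons true ε') z i))
          * crossFactor t (signFlip (Fin.cons true ε') z)
        + (∏ i, Dl t0 t1 (signFlip (Fin.cons false ε') z i))
          * crossFactor t (signFlip (Fin.cons false ε') z)
        = ((∏ i, Dl t0 t1 (signFlip ε' (fun j => z j.succ) i))
            * crossFactor t (signFlip ε' (fun j => z j.succ))) * (1 - t0 * t1 * t ^ n)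
          + ∑ j, ((∏ i, Dl t0 t1 (signFlip ε' (fun j => z j.succ) i))
              * crossFactor t (signFlip ε' (fun j => z j.succ)))
            * (rsd t t0 t1 (signFlip ε' (fun j => z j.succ)) j
              * (signFlip ε' (fun j => z j.succ) j
                + 1 / (z 0 - (signFlip ε' (fun j => z j.succ) j)⁻¹)
                + 1 / ((z 0)⁻¹ - (signFlip ε' (fun j => z j.succ) j)⁻¹))) := by
      intro ε'
      rw [hterm true ε', hterm false ε']
      have hC := lemC t t0 t1 n (signFlip ε' (fun j => z j.succ))
        ⟨hW0 ε', hW2 ε', hWp ε'⟩ (z 0) (hz0 0) (hz2 0)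
        (fun j => (hWx ε' j).1) (fun j => (hWx ε' j).2)
      simp only [Bool.false_eq_true, eq_self_iff_true, if_true, if_false]
      rw [← Finset.mul_sum, ← mul_add]
      linear_combination ((∏ i, Dl t0 t1 (signFlip ε' (fun j => z j.succ) i))
        * crossFactor t (signFlip ε' (fun j => z j.succ))) * hC
    rw [Finset.sum_congr rfl (fun ε' _ => hper ε'), Finset.sum_add_distrib, ← Finset.sum_mul]
    have hIH := IH t t0 t1 (fun j => z j.succ) hy
    simp only [hDl] at hIH
    rw [hIH]
    have hzero : ∑ ε' : Fin n → Bool, ∑ j : Fin n,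
        ((∏ i, Dl t0 t1 (signFlip ε' (fun j => z j.succ) i))
            * crossFactor t (signFlip ε' (fun j => z j.succ)))
          * (rsd t t0 t1 (signFlip ε' (fun j => z j.succ)) j
            * (signFlip ε' (fun j => z j.succ) j
              + 1 / (z 0 - (signFlip ε' (fun j => z j.succ) j)⁻¹)
              + 1 / ((z 0)⁻¹ - (signFlip ε' (fun j => z j.succ) j)⁻¹))) = 0 := by
      rw [Finset.sum_comm]
      refine Finset.sum_eq_zero fun j _ => ?_
      refine Finset.sum_involution (fun ε' _ => Function.update ε' j (!ε' j)) ?_ ?_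
        (fun ε' _ => Finset.mem_univ _) ?_
      · intro ε' _
        have hWu : signFlip (Function.update ε' j (!ε' j)) (fun j => z j.succ)
            = Function.update (signFlip ε' (fun j => z j.succ)) j
              ((signFlip ε' (fun j => z j.succ) j)⁻¹) := by
          funext k
          by_cases hk : k = j
          · subst hk
            simp only [signFlip, Function.update_self]
            cases h : ε' k <;> simp [h]
          · simp [signFlip, Function.update_of_ne hk]
        rw [hWu]
        simp only [Function.update_self, inv_inv]
        have := lemD t t0 t1 (signFlip ε' (fun j => z j.succ)) j
          ⟨hW0 ε', hW2 ε', hWp ε'⟩ (z 0) (hz0 0) (hWx ε' j).1 (hWx ε' j).2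
        linear_combination this
      · intro ε' _ _ h
        have hj := congrFun h j
        simp [Function.update_self] at hj
      · intro ε' _
        funext k
        by_cases hk : k = j
        · subst hk; simp [Function.update_self]
        · simp [Function.update_of_ne hk]
    rw [hzero, add_zero]
    simp only [Fin.prod_univ_succ, Fin.val_zero, Fin.val_succ]
    simp only [show ∀ i : Fin n, n + 1 - 1 - ((i : ℕ) + 1) = n - 1 - (i : ℕ) from fun i => by omega,
      show n + 1 - 1 - 0 = n from by omega]
    ring

end NL
end

/-- Lemma 2 (normalization lemma): for a positive integer `n` and arbitrary complex `t, t₀, t₁`,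
as an identity of rational functions,
`∏_i (1+R(z_i)) ∏_i (1-t₀z_i)(1-t₁z_i)/(1-z_i²) ∏_{i<j} (1-t z_i z_j)/(1-z_i z_j)
  = ∏_i (1 - t^{n-i} t₀ t₁)`. -/
theorem normalization_lemma (n : ℕ) (hn : 0 < n) (t t0 t1 : ℂ)
    (z : Fin n → ℂ) (hz : ZGood z) :
    (∑ ε : Fin n → Bool,
      (∏ i, (1 - t0 * signFlip ε z i) * (1 - t1 * signFlip ε z i) /
          (1 - (signFlip ε z i) ^ 2)) *
        crossFactor t (signFlip ε z))
    = ∏ i : Fin n, (1 - t ^ (n - 1 - (i : ℕ)) * t0 * t1) := by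
  exact NL.main_aux n t t0 t1 z hz
end

section
/- Let n ≥ 0 and let t_0, t_1, …, t_n be arbitrary complex numbers. Then, as an identity of rational functions in z_1, …, z_n, the sum over all sign vectors ε ∈ {±1}^n of ∏_{1≤i≤n} (1 − t_0 z_i^{ε_i})(1 − t_1 z_i^{ε_i}) ⋯ (1 − t_n z_i^{ε_i})/(1 − z_i^{2ε_i}) · ∏_{1≤i<j≤n} 1/(1 − z_i^{ε_i} z_j^{ε_j}) equals ∏_{0≤i<j≤n} (1 − t_i t_j). -/
open scoped BigOperators
open Finset MeasureTheory

/-!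
Induct on `n`, splitting off the last parameter `x = t_{n+1}`. With `w = z^ε` and
`summand t w` the `ε`-term, the left side becomes
`∑_ε summand (t_0, …, t_n) w · ∏_i (1 - w_i x)` and the right side
`∏_{r<s≤n} (1 - t_r t_s) · ∏_{r≤n} (1 - t_r x)`; both are polynomials of degree at most
`n + 1` in `x`. At `x = z_k^{±1}` every term with `w_k = x⁻¹` vanishes, while in the others
the factors `1 - w_i x` cancel the denominators `1 - w_k²` and `1 - w_k w_j` involving `z_k`,
leaving `∏_r (1 - t_r x)` times the same sum in the other `n` variables, which is the right
side by induction. So the two polynomials agree at the `2 (n + 1)` distinct points `z_k^{±1}`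
and are equal.
-/

namespace TypeI

section Products

variable {M : Type*} [CommMonoid M] {n : ℕ}

def ltProd (c : Fin n → Fin n → M) : M :=
  ∏ i, ∏ j, if i < j then c i j else 1

theorem ltProd_succAbove (c : Fin (n + 1) → Fin (n + 1) → M) (hc : ∀ i j, c i j = c j i)
    (k : Fin (n + 1)) :
    ltProd c = (∏ j, c k (k.succAbove j)) *
      ltProd fun i j => c (k.succAbove i) (k.succAbove j) := by
  unfold ltProd
  simp only [Fin.prod_univ_succAbove _ k, lt_irrefl, if_false, one_mul,
    Fin.succAbove_lt_succAbove_iff, prod_mul_distrib, ← mul_assoc]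
  congr 1
  rw [← prod_mul_distrib]
  refine prod_congr rfl fun j _ => ?_
  rcases (Fin.succAbove_ne k j).lt_or_gt with h | h
  · rw [if_neg h.asymm, if_pos h, one_mul, hc]
  · rw [if_pos h, if_neg h.asymm, mul_one]

end Products

section Summand

variable {K : Type*} [Field K] {m n : ℕ}

def summand (t : Fin m → K) (w : Fin n → K) : K :=
  (∏ i, (∏ r, (1 - t r * w i)) / (1 - w i ^ 2)) * ltProd fun i j => (1 - w i * w j)⁻¹

theorem summand_eq_init_mul (t : Fin (m + 1) → K) (w : Fin n → K) :
    summand t w = summand (Fin.init t) w * ∏ i, (1 - w i * t (Fin.last m)) := by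
  rw [summand, summand, mul_right_comm, ← prod_mul_distrib]
  congr 1
  refine prod_congr rfl fun i _ => ?_
  rw [Fin.prod_univ_castSucc, div_mul_eq_mul_div, mul_comm (w i)]
  rfl

theorem summand_succAbove (t : Fin m → K) (w : Fin (n + 1) → K) (k : Fin (n + 1)) :
    summand t w = (∏ r, (1 - t r * w k)) / (1 - w k ^ 2) *
      (∏ j, (1 - w k * w (k.succAbove j)))⁻¹ * summand t (w ∘ k.succAbove) := by
  rw [summand, summand, Fin.prod_univ_succAbove _ k,
    ltProd_succAbove _ (fun i j => by rw [mul_comm]) k, prod_inv_distrib]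
  simp only [Function.comp_apply]
  ring

theorem summand_mul_prod_one_sub_mul (t : Fin m → K) (w : Fin (n + 1) → K) (k : Fin (n + 1))
    (hk : w k ^ 2 ≠ 1) (hkj : ∀ j, w k * w (k.succAbove j) ≠ 1) :
    summand t w * ∏ i, (1 - w i * w k) =
      (∏ r, (1 - t r * w k)) * summand t (w ∘ k.succAbove) := by
  have hsq : 1 - w k ^ 2 ≠ 0 := sub_ne_zero.mpr hk.symm
  have hcross : ∏ j, (1 - w k * w (k.succAbove j)) ≠ 0 :=
    prod_ne_zero_iff.mpr fun j _ => sub_ne_zero.mpr (hkj j).symm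
  have hprod : ∏ i, (1 - w i * w k) = (1 - w k ^ 2) * ∏ j, (1 - w k * w (k.succAbove j)) := by
    rw [Fin.prod_univ_succAbove _ k]
    congr 1
    · ring
    · exact prod_congr rfl fun j _ => by ring
  rw [summand_succAbove t w k, hprod]
  field_simp
  simp only [mul_comm (w k), mul_comm (summand _ _)]

end Summand

section SignFlip

variable {n : ℕ}

noncomputable def invIf (b : Bool) (x : ℂ) : ℂ := if b then x⁻¹ else x

theorem invIf_not (b : Bool) (x : ℂ) : invIf (!b) x = (invIf b x)⁻¹ := by
  cases b <;> simp [invIf]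

theorem invIf_ne_zero (b : Bool) {x : ℂ} (hx : x ≠ 0) : invIf b x ≠ 0 := by
  cases b <;> simp [invIf, hx]

theorem signFlip_apply (ε : Fin n → Bool) (z : Fin n → ℂ) (i : Fin n) :
    signFlip ε z i = invIf (ε i) (z i) := rfl

theorem signFlip_insertNth_self (k : Fin (n + 1)) (b : Bool) (ε : Fin n → Bool)
    (z : Fin (n + 1) → ℂ) : signFlip (k.insertNth b ε) z k = invIf b (z k) := by
  simp [signFlip_apply]

theorem signFlip_insertNth_comp_succAbove (k : Fin (n + 1)) (b : Bool) (ε : Fin n → Bool)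
    (z : Fin (n + 1) → ℂ) :
    signFlip (k.insertNth b ε) z ∘ k.succAbove = signFlip ε (z ∘ k.succAbove) := by
  ext j
  simp [signFlip_apply]

theorem _root_.ZGood.comp_succAbove {z : Fin (n + 1) → ℂ} (hz : ZGood z) (k : Fin (n + 1)) :
    ZGood (z ∘ k.succAbove) :=
  ⟨fun _ => hz.1 _, fun _ => hz.2.1 _,
    fun _ _ hij => hz.2.2 _ _ (Fin.succAbove_right_injective.ne hij)⟩

theorem _root_.ZGood.injective_invIf {z : Fin n → ℂ} (hz : ZGood z) :
    Function.Injective fun p : Fin n × Bool => invIf p.2 (z p.1) := by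
  obtain ⟨hz0, hsq, hne⟩ := hz
  rintro ⟨i, b⟩ ⟨j, c⟩ (h : invIf b (z i) = invIf c (z j))
  have := hz0 i
  have := hz0 j
  by_cases hij : i = j
  · subst hij
    have := hsq i
    cases b <;> cases c <;> simp only [invIf] at h <;> grind
  · have := hne i j hij
    cases b <;> cases c <;> simp only [invIf] at h <;> grind

theorem _root_.ZGood.invIf_mul_invIf_eq_one_iff {z : Fin n → ℂ} (hz : ZGood z) {i j : Fin n}
    {b c : Bool} : invIf b (z i) * invIf c (z j) = 1 ↔ i = j ∧ b = !c := by
  rw [mul_eq_one_iff_eq_inv₀ (invIf_ne_zero c (hz.1 j)), ← invIf_not]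
  exact (hz.injective_invIf.eq_iff (a := (i, b)) (b := (j, !c))).trans Prod.ext_iff

end SignFlip

section Specialization

variable {m n : ℕ}

theorem sum_summand_signFlip_mul_eval (t : Fin m → ℂ) {z : Fin (n + 1) → ℂ} (hz : ZGood z)
    (k : Fin (n + 1)) (b : Bool) :
    ∑ ε, summand t (signFlip ε z) * ∏ i, (1 - signFlip ε z i * invIf b (z k)) =
      (∏ r, (1 - t r * invIf b (z k))) * ∑ ε, summand t (signFlip ε (z ∘ k.succAbove)) := by
  rw [← (Fin.insertNthEquiv (fun _ => Bool) k).sum_comp, Fintype.sum_prod_type,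
    Fintype.sum_eq_single b, mul_sum]
  all_goals simp only [Fin.insertNthEquiv, Equiv.coe_fn_mk]
  · refine sum_congr rfl fun ε _ => ?_
    rw [← signFlip_insertNth_self k b ε z, summand_mul_prod_one_sub_mul,
      signFlip_insertNth_comp_succAbove]
    · rw [signFlip_insertNth_self, sq, Ne, hz.invIf_mul_invIf_eq_one_iff]
      simp
    · intro j
      rw [signFlip_insertNth_self, signFlip_apply, Ne,
        hz.invIf_mul_invIf_eq_one_iff]
      exact fun h => Fin.succAbove_ne k j h.1.symm
  · intro β hβ
    refine sum_eq_zero fun ε _ => mul_eq_zero_of_right _ (prod_eq_zero (mem_univ k) ?_)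
    rw [signFlip_insertNth_self, sub_eq_zero, eq_comm, hz.invIf_mul_invIf_eq_one_iff]
    exact ⟨rfl, Bool.eq_not.mpr hβ⟩

end Specialization

section Interpolation

open Polynomial

variable {K : Type*} [Field K] {n : ℕ}

noncomputable def linProd (a : Fin n → K) : K[X] := ∏ i, (1 - C (a i) * X)

theorem eval_linProd (a : Fin n → K) (x : K) : (linProd a).eval x = ∏ i, (1 - a i * x) := by
  simp [linProd, eval_prod]

theorem natDegree_linProd_le (a : Fin n → K) : (linProd a).natDegree ≤ n := by
  have hfactor : ∀ i, (1 - C (a i) * X).natDegree ≤ 1 := fun i => by compute_degree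
  simpa [linProd] using (natDegree_prod_le univ _).trans (sum_le_sum fun i _ => hfactor i)

theorem sum_summand_signFlip_mul_eq {m : ℕ} (t : Fin m → ℂ) {z : Fin (n + 1) → ℂ}
    (hz : ZGood z) (P : ℂ)
    (hP : ∀ k : Fin (n + 1), ∑ ε, summand t (signFlip ε (z ∘ k.succAbove)) = P)
    (hm : m ≤ 2 * n + 1) (x : ℂ) :
    ∑ ε, summand t (signFlip ε z) * ∏ i, (1 - signFlip ε z i * x) =
      P * ∏ r, (1 - t r * x) := by
  have hpoly := eq_of_natDegree_lt_card_of_eval_eq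
    (∑ ε, C (summand t (signFlip ε z)) * linProd (signFlip ε z)) (C P * linProd t)
    hz.injective_invIf ?_ ?_
  · simpa [eval_finsetSum, eval_linProd] using congrArg (eval x) hpoly
  · rintro ⟨k, b⟩
    simp only [eval_finsetSum, eval_mul, eval_C, eval_linProd]
    rw [sum_summand_signFlip_mul_eval t hz k b, hP, mul_comm]
  · have hsum :
        (∑ ε, C (summand t (signFlip ε z)) * linProd (signFlip ε z)).natDegree ≤ n + 1 :=
      natDegree_sum_le_of_forall_le _ _ fun ε _ =>
        (natDegree_C_mul_le _ _).trans (natDegree_linProd_le _)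
    have hprod := (natDegree_C_mul_le P _).trans (natDegree_linProd_le t)
    simp only [Fintype.card_prod, Fintype.card_fin, Fintype.card_bool]
    omega

end Interpolation

theorem sum_summand_signFlip_eq_ltProd :
    ∀ {n : ℕ} (t : Fin (n + 1) → ℂ) {z : Fin n → ℂ}, ZGood z →
      ∑ ε, summand t (signFlip ε z) = ltProd fun r s => 1 - t r * t s
  | 0, t, z, _ => by simp [summand, ltProd]
  | n + 1, t, z, hz => by
    have hinit := sum_summand_signFlip_mul_eq (Fin.init t) hz _
      (fun k => sum_summand_signFlip_eq_ltProd (Fin.init t) (hz.comp_succAbove k)) (by omega)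
      (t (Fin.last _))
    rw [ltProd_succAbove _ (fun r s => by ring) (Fin.last _)]
    simp_rw [summand_eq_init_mul t, hinit, Fin.succAbove_last]
    rw [mul_comm]
    congr 1
    exact prod_congr rfl fun r _ => by rw [mul_comm, Fin.init]

end TypeI

/-- The type-I analogue of the normalization lemma: for `n ≥ 0` and arbitrary complex
`t₀, …, t_n` (note: `n+1` parameters for `n` variables), as an identity of rational functions,
`∏_i (1+R(z_i)) ∏_i (1-t₀z_i)⋯(1-t_n z_i)/(1-z_i²) ∏_{i<j} 1/(1-z_i z_j)
  = ∏_{0≤i<j≤n} (1 - t_i t_j)`. -/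
theorem typeI_lemma (n : ℕ) (t : Fin (n + 1) → ℂ) (z : Fin n → ℂ) (hz : ZGood z) :
    (∑ ε : Fin n → Bool,
      (∏ i, (∏ r : Fin (n + 1), (1 - t r * signFlip ε z i)) / (1 - (signFlip ε z i) ^ 2)) *
        ∏ i, ∏ j, if i < j then (1 - signFlip ε z i * signFlip ε z j)⁻¹ else 1)
    = ∏ r : Fin (n + 1), ∏ s : Fin (n + 1), if r < s then 1 - t r * t s else 1 :=
  TypeI.sum_summand_signFlip_eq_ltProd t hz
end

section
/- The product f_{n,m}(z;y) := ∏_{1≤i≤n, 1≤j≤m} (y_j + 1/y_j − z_i − 1/z_i) has the expansion f_{n,m} = ∑_{λ ⊂ m^n} (−1)^{|λ|} m_λ(z_1,…,z_n) m_{n^m−λ'}(y_1,…,y_m) + dominated terms, in the sense that for each partition λ contained in the m×n rectangle, the coefficient of m_λ(z) in f_{n,m} (as a BC_m-symmetric Laurent polynomial in y) equals (−1)^{|λ|} m_{n^m−λ'}(y) plus a linear combination of m_μ(y) with μ strictly dominated by n^m−λ', and symmetrically with the roles of z and y exchanged. -/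
open scoped BigOperators
open Finset MeasureTheory

namespace IKE

open Finset

abbrev Choice := Bool × Bool

/-- exponent of z contributed by a choice -/
def zp (c : Choice) : ℤ := if c.1 then (if c.2 then 1 else -1) else 0
/-- exponent of y contributed by a choice -/
def yp (c : Choice) : ℤ := if c.1 then 0 else (if c.2 then 1 else -1)
/-- sign contributed by a choice -/
noncomputable def sg (c : Choice) : ℂ := if c.1 then -1 else 1

abbrev Tab (n m : ℕ) := Fin n × Fin m → Choice

variable {n m : ℕ}

def zexp (T : Tab n m) : Fin n → ℤ := fun i => ∑ j, zp (T (i, j))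
def yexp (T : Tab n m) : Fin m → ℤ := fun j => ∑ i, yp (T (i, j))
noncomputable def sgn (T : Tab n m) : ℂ := ∏ p, sg (T p)

/-- monomial -/
noncomputable def zMon {k : ℕ} (z : Fin k → ℂ) (α : Fin k → ℤ) : ℂ := ∏ i, z i ^ α i

noncomputable def csum (n m : ℕ) (α : Fin n → ℤ) (β : Fin m → ℤ) : ℂ :=
  ∑ T ∈ univ.filter (fun T : Tab n m => zexp T = α ∧ yexp T = β), sgn T

lemma prod_zpow₀ {ι : Type*} (s : Finset ι) (x : ℂ) (hx : x ≠ 0) (f : ι → ℤ) :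
    (∏ i ∈ s, x ^ f i) = x ^ (∑ i ∈ s, f i) := by
  classical
  induction s using Finset.induction with
  | empty => simp
  | @insert a s' h ih => rw [Finset.prod_insert h, Finset.sum_insert h, ih, zpow_add₀ hx]

lemma choice_sum (a b : ℂ) :
    ∑ c : Choice, sg c * a ^ zp c * b ^ yp c = b + b⁻¹ - a - a⁻¹ := by
  rw [Fintype.sum_prod_type]
  simp [sg, zp, yp, Fintype.sum_bool, zpow_neg]
  ring

lemma expand (z : Fin n → ℂ) (y : Fin m → ℂ) (hz : ∀ i, z i ≠ 0) (hy : ∀ j, y j ≠ 0) :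
    interactionKernel n m z y =
      ∑ T : Tab n m, sgn T * zMon z (zexp T) * zMon y (yexp T) := by
  have h1 : interactionKernel n m z y
      = ∏ p : Fin n × Fin m, ∑ c ∈ (univ : Finset Choice),
          sg c * z p.1 ^ zp c * y p.2 ^ yp c := by
    rw [interactionKernel,
      ← Fintype.prod_prod_type' (f := fun i j => y j + (y j)⁻¹ - z i - (z i)⁻¹)]
    exact Finset.prod_congr rfl fun p _ => (choice_sum (z p.1) (y p.2)).symm
  rw [h1, Finset.prod_univ_sum, Fintype.piFinset_univ]
  refine Finset.sum_congr rfl fun T _ => ?_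
  have h2 : (∏ p : Fin n × Fin m, sg (T p) * z p.1 ^ zp (T p) * y p.2 ^ yp (T p))
      = sgn T * (∏ p : Fin n × Fin m, z p.1 ^ zp (T p))
          * (∏ p : Fin n × Fin m, y p.2 ^ yp (T p)) := by
    rw [sgn, ← Finset.prod_mul_distrib, ← Finset.prod_mul_distrib]
  rw [h2]
  congr 1
  · congr 1
    rw [Fintype.prod_prod_type, zMon]
    exact Finset.prod_congr rfl fun i _ => prod_zpow₀ _ _ (hz i) _
  · rw [Fintype.prod_prod_type, Finset.prod_comm, zMon]
    exact Finset.prod_congr rfl fun j _ => prod_zpow₀ _ _ (hy j) _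


section Part
variable {N : ℕ}

lemma mem_signedOrbit_iff {lam α : Fin N → ℤ} :
    α ∈ signedOrbit N lam ↔ ∃ (p : Equiv.Perm (Fin N)) (ε : Fin N → Bool),
      ∀ i, α i = if ε i then -lam (p i) else lam (p i) := by
  constructor
  · intro h
    simp only [signedOrbit, Finset.mem_image] at h
    obtain ⟨⟨p, ε⟩, -, h⟩ := h
    exact ⟨p, ε, fun i => by rw [← h]⟩
  · rintro ⟨p, ε, h⟩
    simp only [signedOrbit, Finset.mem_image]
    exact ⟨⟨p, ε⟩, Finset.mem_univ _, by funext i; exact (h i).symm⟩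

def part (α : Fin N → ℤ) : Fin N → ℕ :=
  fun i => (|α (Tuple.sort (fun i => |α i|) i.rev)|).toNat

lemma part_cast (α : Fin N → ℤ) (i : Fin N) :
    (part α i : ℤ) = |α (Tuple.sort (fun i => |α i|) i.rev)| :=
  Int.toNat_of_nonneg (abs_nonneg _)

lemma part_antitone (α : Fin N → ℤ) : Antitone (part α) := by
  intro i j hij
  have h1 : j.rev ≤ i.rev := Fin.rev_le_rev.mpr hij
  have h2 := Tuple.monotone_sort (fun i => |α i|) h1
  exact Int.toNat_le_toNat h2

lemma part_le {α : Fin N → ℤ} {B : ℕ} (h : ∀ i, |α i| ≤ (B : ℤ)) (i : Fin N) :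
    part α i ≤ B :=
  Int.toNat_le.mpr (h _)

lemma mem_orbit_part (α : Fin N → ℤ) : α ∈ signedOrbit N (natToZ (part α)) := by
  rw [mem_signedOrbit_iff]
  refine ⟨(Fin.revPerm.trans (Tuple.sort fun i => |α i|)).symm,
    fun i => decide (α i < 0), fun i => ?_⟩
  have hp : (natToZ (part α)) ((Fin.revPerm.trans (Tuple.sort fun i => |α i|)).symm i)
      = |α i| := by
    show (part α _ : ℤ) = _
    rw [part_cast]
    simp [Equiv.symm_trans_apply, Fin.rev_rev]
  rw [hp]
  by_cases h : α i < 0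
  · simp [h, abs_of_neg h]
  · simp [h, abs_of_nonneg (le_of_not_gt h)]

lemma part_eq_of_mem {lam : Fin N → ℕ} (hl : Antitone lam) {α : Fin N → ℤ}
    (hα : α ∈ signedOrbit N (natToZ lam)) : part α = lam := by
  rw [mem_signedOrbit_iff] at hα
  obtain ⟨p, ε, h⟩ := hα
  have habs : (fun i => |α i|) = natToZ lam ∘ p := by
    funext i
    rw [h i]
    rcases Bool.eq_false_or_eq_true (ε i) with he | he <;>
      simp [he, natToZ, abs_of_nonneg, Int.natCast_nonneg]
  set σ := Tuple.sort (fun i => |α i|) with hσ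
  have h3 : ∀ x, |α x| = natToZ lam (p x) := fun x => congrFun habs x
  have h1 : Monotone (natToZ lam ∘ ⇑(σ.trans p)) := by
    intro a b hab
    have hmon := Tuple.monotone_sort (fun i => |α i|) hab
    simp only [Function.comp_apply, Equiv.trans_apply]
    rw [← h3, ← h3]
    exact hmon
  have h2 : Monotone (natToZ lam ∘ ⇑(Fin.revPerm (n := N))) := by
    intro a b hab
    have : Fin.rev b ≤ Fin.rev a := Fin.rev_le_rev.mpr hab
    exact_mod_cast Nat.cast_le.mpr (hl this)
  have key := Tuple.unique_monotone h1 h2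
  funext i
  have := congrFun key i.rev
  simp only [Function.comp_apply, Equiv.trans_apply, Fin.revPerm_apply, Fin.rev_rev] at this
  have hv : (part α i : ℤ) = (lam i : ℤ) := by
    rw [part_cast, ← hσ, h3, this]; rfl
  exact_mod_cast hv

end Part


section Act
variable {n m : ℕ}

lemma perm_apply_inv_self' {α : Type*} (f : Equiv.Perm α) (x : α) : f (f⁻¹ x) = x :=
  f.apply_symm_apply x

lemma perm_inv_apply_self' {α : Type*} (f : Equiv.Perm α) (x : α) : f⁻¹ (f x) = x :=
  f.symm_apply_apply x

def twist (e d : Bool) (c : Choice) : Choice := (c.1, c.2 != (if c.1 then e else d))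

def act (p : Equiv.Perm (Fin n)) (q : Equiv.Perm (Fin m)) (ε : Fin n → Bool)
    (δ : Fin m → Bool) (T : Tab n m) : Tab n m :=
  fun x => twist (ε x.1) (δ x.2) (T (p x.1, q x.2))

lemma twist_twist (e d : Bool) (c : Choice) : twist e d (twist e d c) = c := by
  rcases c with ⟨c1, c2⟩; cases c1 <;> cases c2 <;> cases e <;> cases d <;> rfl

lemma zp_twist (e d : Bool) (c : Choice) :
    zp (twist e d c) = (if e then -1 else 1) * zp c := by
  rcases c with ⟨c1, c2⟩; cases c1 <;> cases c2 <;> cases e <;> cases d <;> decide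

lemma yp_twist (e d : Bool) (c : Choice) :
    yp (twist e d c) = (if d then -1 else 1) * yp c := by
  rcases c with ⟨c1, c2⟩; cases c1 <;> cases c2 <;> cases e <;> cases d <;> decide

lemma sg_twist (e d : Bool) (c : Choice) : sg (twist e d c) = sg c := rfl

lemma zexp_act (p : Equiv.Perm (Fin n)) (q : Equiv.Perm (Fin m)) (ε : Fin n → Bool)
    (δ : Fin m → Bool) (T : Tab n m) (i : Fin n) :
    zexp (act p q ε δ T) i = (if ε i then -1 else 1) * zexp T (p i) := by
  unfold zexp act
  rw [Finset.mul_sum]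
  rw [← Equiv.sum_comp q (fun j => (if ε i then (-1 : ℤ) else 1) * zp (T (p i, j)))]
  exact Finset.sum_congr rfl fun j _ => zp_twist _ _ _

lemma yexp_act (p : Equiv.Perm (Fin n)) (q : Equiv.Perm (Fin m)) (ε : Fin n → Bool)
    (δ : Fin m → Bool) (T : Tab n m) (j : Fin m) :
    yexp (act p q ε δ T) j = (if δ j then -1 else 1) * yexp T (q j) := by
  unfold yexp act
  rw [Finset.mul_sum]
  rw [← Equiv.sum_comp p (fun i => (if δ j then (-1 : ℤ) else 1) * yp (T (i, q j)))]
  exact Finset.sum_congr rfl fun i _ => yp_twist _ _ _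

lemma sgn_act (p : Equiv.Perm (Fin n)) (q : Equiv.Perm (Fin m)) (ε : Fin n → Bool)
    (δ : Fin m → Bool) (T : Tab n m) : sgn (act p q ε δ T) = sgn T := by
  unfold sgn act
  rw [show (∏ x : Fin n × Fin m, sg (twist (ε x.1) (δ x.2) (T (p x.1, q x.2))))
      = ∏ x : Fin n × Fin m, sg (T (p x.1, q x.2)) from
    Finset.prod_congr rfl fun x _ => sg_twist _ _ _]
  exact Equiv.prod_comp (p.prodCongr q) (fun x => sg (T x))

lemma act_act_inv (p : Equiv.Perm (Fin n)) (q : Equiv.Perm (Fin m)) (ε : Fin n → Bool)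
    (δ : Fin m → Bool) (T : Tab n m) :
    act p⁻¹ q⁻¹ (fun i => ε (p⁻¹ i)) (fun j => δ (q⁻¹ j)) (act p q ε δ T) = T := by
  funext x
  show twist _ _ (twist (ε (p⁻¹ x.1)) (δ (q⁻¹ x.2)) (T (p (p⁻¹ x.1), q (q⁻¹ x.2)))) = T x
  rw [perm_apply_inv_self', perm_apply_inv_self', twist_twist]

lemma act_inv_act (p : Equiv.Perm (Fin n)) (q : Equiv.Perm (Fin m)) (ε : Fin n → Bool)
    (δ : Fin m → Bool) (T : Tab n m) :
    act p q ε δ (act p⁻¹ q⁻¹ (fun i => ε (p⁻¹ i)) (fun j => δ (q⁻¹ j)) T) = T := by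
  funext x
  show twist (ε x.1) (δ x.2) (twist (ε (p⁻¹ (p x.1))) (δ (q⁻¹ (q x.2)))
      (T (p⁻¹ (p x.1), q⁻¹ (q x.2)))) = T x
  rw [perm_inv_apply_self', perm_inv_apply_self', twist_twist]

lemma csum_inv {lam : Fin n → ℤ} {mu : Fin m → ℤ} {α : Fin n → ℤ} {β : Fin m → ℤ}
    (hα : α ∈ signedOrbit n lam) (hβ : β ∈ signedOrbit m mu) :
    csum n m α β = csum n m lam mu := by
  classical
  rw [mem_signedOrbit_iff] at hα hβ
  obtain ⟨p, ε, hα⟩ := hα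
  obtain ⟨q, δ, hβ⟩ := hβ
  unfold csum
  have hz : ∀ T : Tab n m, zexp T = α →
      zexp (act p⁻¹ q⁻¹ (fun i => ε (p⁻¹ i)) (fun j => δ (q⁻¹ j)) T) = lam := by
    intro T hT
    funext i
    rw [zexp_act, hT, hα, perm_apply_inv_self']
    cases hε : ε (p⁻¹ i) <;> simp [hε]
  have hy : ∀ T : Tab n m, yexp T = β →
      yexp (act p⁻¹ q⁻¹ (fun i => ε (p⁻¹ i)) (fun j => δ (q⁻¹ j)) T) = mu := by
    intro T hT
    funext j
    rw [yexp_act, hT, hβ, perm_apply_inv_self']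
    cases hδ : δ (q⁻¹ j) <;> simp [hδ]
  have hz' : ∀ T : Tab n m, zexp T = lam → zexp (act p q ε δ T) = α := by
    intro T hT
    funext i
    rw [zexp_act, hT, hα]
    cases hε : ε i <;> simp [hε]
  have hy' : ∀ T : Tab n m, yexp T = mu → yexp (act p q ε δ T) = β := by
    intro T hT
    funext j
    rw [yexp_act, hT, hβ]
    cases hδ : δ j <;> simp [hδ]
  refine Finset.sum_nbij' (act p⁻¹ q⁻¹ (fun i => ε (p⁻¹ i)) (fun j => δ (q⁻¹ j)))
    (act p q ε δ) ?_ ?_ ?_ ?_ ?_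
  · intro T hT
    rw [Finset.mem_filter] at hT ⊢
    exact ⟨Finset.mem_univ _, hz T hT.2.1, hy T hT.2.2⟩
  · intro T hT
    rw [Finset.mem_filter] at hT ⊢
    exact ⟨Finset.mem_univ _, hz' T hT.2.1, hy' T hT.2.2⟩
  · intro T _; exact act_inv_act p q ε δ T
  · intro T _; exact act_act_inv p q ε δ T
  · intro T _; exact (sgn_act _ _ _ _ _).symm

end Act


section Count
variable {n m : ℕ}

lemma card_filter_val {M : ℕ} (P : ℕ → Prop) [DecidablePred P] :
    ((univ : Finset (Fin M)).filter (fun j : Fin M => P (j : ℕ))).card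
      = ((Finset.range M).filter P).card := by
  refine Finset.card_nbij (fun j => (j : ℕ)) ?_ ?_ ?_
  · intro a ha
    simp only [Finset.mem_coe, Finset.mem_filter, Finset.mem_range] at ha ⊢
    exact ⟨a.isLt, ha.2⟩
  · intro a _ b _ h
    exact Fin.val_injective h
  · intro b hb
    simp only [Finset.coe_filter, Finset.mem_range, Set.mem_setOf_eq] at hb ⊢
    exact ⟨⟨b, hb.1⟩, ⟨Finset.mem_univ _, hb.2⟩, rfl⟩

lemma card_lt_and_le {M : ℕ} (k v : ℕ) (hv : v ≤ M) :
    ((univ : Finset (Fin M)).filter (fun j : Fin M => (j : ℕ) < k ∧ M - (j : ℕ) ≤ v)).card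
      = min k M - (M - v) := by
  rw [card_filter_val (P := fun j => j < k ∧ M - j ≤ v)]
  rw [show (Finset.range M).filter (fun j => j < k ∧ M - j ≤ v)
      = Finset.Ico (M - v) (min k M) from by
    ext j; simp only [Finset.mem_filter, Finset.mem_range, Finset.mem_Ico]; omega]
  rw [Nat.card_Ico]

lemma card_le_part {M : ℕ} (v : ℕ) (hv : v ≤ M) :
    ((univ : Finset (Fin M)).filter (fun j : Fin M => M - (j : ℕ) ≤ v)).card = v := by
  rw [card_filter_val (P := fun j => M - j ≤ v)]
  rw [show (Finset.range M).filter (fun j => M - j ≤ v) = Finset.Ico (M - v) M from by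
    ext j; simp only [Finset.mem_filter, Finset.mem_range, Finset.mem_Ico]; omega]
  rw [Nat.card_Ico]; omega

lemma card_lt {M k : ℕ} :
    ((univ : Finset (Fin M)).filter (fun j : Fin M => (j : ℕ) < k)).card = min k M := by
  rw [card_filter_val (P := fun j => j < k)]
  rw [show (Finset.range M).filter (fun j => j < k) = Finset.range (min k M) from by
    ext j; simp only [Finset.mem_filter, Finset.mem_range]; omega]
  rw [Finset.card_range]

lemma conjPart_le {N : ℕ} (lam : Fin N → ℕ) (c : ℕ) : conjPart lam c ≤ N := by
  rw [conjPart]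
  exact le_trans (Finset.card_filter_le _ _) (by simp)

lemma sum_card_filter_comm {a b : ℕ} (J : Finset (Fin b)) (P : Fin a → Fin b → Prop)
    [∀ i j, Decidable (P i j)] :
    ∑ j ∈ J, ((univ.filter fun i => P i j).card)
      = ∑ i : Fin a, ((J.filter fun j => P i j).card) := by
  simp_rw [Finset.card_filter]
  exact Finset.sum_comm

lemma zp_le_ite (c : Choice) : zp c ≤ (if c.1 = true then (1 : ℤ) else 0) := by
  rcases c with ⟨c1, c2⟩; cases c1 <;> cases c2 <;> decide

lemma abs_zp_le (c : Choice) : |zp c| ≤ 1 := by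
  rcases c with ⟨c1, c2⟩; cases c1 <;> cases c2 <;> decide

lemma yp_le_ite (c : Choice) : yp c ≤ (if c.1 = false then (1 : ℤ) else 0) := by
  rcases c with ⟨c1, c2⟩; cases c1 <;> cases c2 <;> decide

lemma abs_yp_le (c : Choice) : |yp c| ≤ 1 := by
  rcases c with ⟨c1, c2⟩; cases c1 <;> cases c2 <;> decide

lemma zexp_le_card (T : Tab n m) (i : Fin n) :
    zexp T i ≤ ((univ.filter fun j => (T (i, j)).1 = true).card : ℤ) := by
  rw [zexp, ← Finset.sum_boole]
  exact Finset.sum_le_sum fun j _ => zp_le_ite _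

lemma yexp_le_card (T : Tab n m) (j : Fin m) :
    yexp T j ≤ ((univ.filter fun i => (T (i, j)).1 = false).card : ℤ) := by
  rw [yexp, ← Finset.sum_boole]
  exact Finset.sum_le_sum fun i _ => yp_le_ite _

lemma abs_zexp_le (T : Tab n m) (i : Fin n) : |zexp T i| ≤ (m : ℤ) := by
  refine le_trans (Finset.abs_sum_le_sum_abs _ _) ?_
  calc ∑ j, |zp (T (i, j))| ≤ ∑ _j : Fin m, (1 : ℤ) :=
        Finset.sum_le_sum fun j _ => abs_zp_le _
    _ = m := by simp

lemma abs_yexp_le (T : Tab n m) (j : Fin m) : |yexp T j| ≤ (n : ℤ) := by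
  refine le_trans (Finset.abs_sum_le_sum_abs _ _) ?_
  calc ∑ i, |yp (T (i, j))| ≤ ∑ _i : Fin n, (1 : ℤ) :=
        Finset.sum_le_sum fun i _ => abs_yp_le _
    _ = n := by simp

end Count

section Key

lemma key {N M : ℕ} (B : Fin N → Fin M → Bool) (lam : Fin N → ℕ) (mu : Fin M → ℕ)
    (hlam : ∀ i, (lam i : ℤ) ≤ ((univ.filter fun j => B i j = true).card : ℤ))
    (hmu : ∀ j, (mu j : ℤ) ≤ ((univ.filter fun i => B i j = false).card : ℤ))
    (k : ℕ) :
    ∑ j ∈ univ.filter (fun j : Fin M => (j : ℕ) < k), (mu j : ℤ)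
      ≤ ∑ j ∈ univ.filter (fun j : Fin M => (j : ℕ) < k),
          ((N : ℤ) - (conjPart lam (M - (j : ℕ)) : ℤ)) := by
  classical
  have hlamN : ∀ i, lam i ≤ (univ.filter fun j => B i j = true).card := by
    intro i; exact_mod_cast hlam i
  have hlamM : ∀ i, lam i ≤ M :=
    fun i => le_trans (hlamN i) (le_trans (Finset.card_filter_le _ _) (by simp))
  -- counts of false and true in columns add to N
  have hcols : ∀ j, (univ.filter fun i => B i j = false).card
      + (univ.filter fun i => B i j = true).card = N := by
    intro j
    rw [show (univ.filter fun i => B i j = false)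
        = (univ.filter fun i : Fin N => ¬ (B i j = true)) from by
      apply Finset.filter_congr; intro i _; simp]
    rw [add_comm, Finset.card_filter_add_card_filter_not]
    simp
  -- step 1
  have step1 : ∑ j ∈ univ.filter (fun j : Fin M => (j : ℕ) < k), (mu j : ℤ)
      ≤ ∑ j ∈ univ.filter (fun j : Fin M => (j : ℕ) < k),
          ((N : ℤ) - ((univ.filter fun i => B i j = true).card : ℤ)) := by
    refine Finset.sum_le_sum fun j _ => ?_
    have h1 := hmu j
    have h2 := hcols j
    omega
  -- core: column Z-counts dominate conjugate partial sums
  have core : ∑ j ∈ univ.filter (fun j : Fin M => (j : ℕ) < k),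
        (conjPart lam (M - (j : ℕ)) : ℤ)
      ≤ ∑ j ∈ univ.filter (fun j : Fin M => (j : ℕ) < k),
          (((univ.filter fun i => B i j = true).card : ℤ)) := by
    have hnat : ∑ j ∈ univ.filter (fun j : Fin M => (j : ℕ) < k),
          conjPart lam (M - (j : ℕ))
        ≤ ∑ j ∈ univ.filter (fun j : Fin M => (j : ℕ) < k),
            (univ.filter fun i => B i j = true).card := by
      simp only [conjPart]
      rw [sum_card_filter_comm _ (fun i (j : Fin M) => M - (j : ℕ) ≤ lam i),
        sum_card_filter_comm _ (fun i (j : Fin M) => B i j = true)]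
      refine Finset.sum_le_sum fun i _ => ?_
      have h1 : ((univ.filter (fun j : Fin M => (j : ℕ) < k)).filter
          (fun j : Fin M => M - (j : ℕ) ≤ lam i)).card = min k M - (M - lam i) := by
        rw [Finset.filter_filter]
        exact card_lt_and_le k (lam i) (hlamM i)
      have h2 : ((univ.filter (fun j : Fin M => (j : ℕ) < k)).filter
            (fun j : Fin M => B i j = true)).card
          + ((univ.filter fun j : Fin M => B i j = true).filter
            (fun j : Fin M => ¬ ((j : ℕ) < k))).card
          = (univ.filter fun j : Fin M => B i j = true).card := by
        rw [show (univ.filter (fun j : Fin M => (j : ℕ) < k)).filter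
              (fun j : Fin M => B i j = true)
            = (univ.filter (fun j : Fin M => B i j = true)).filter
              (fun j : Fin M => (j : ℕ) < k) from by
          rw [Finset.filter_filter, Finset.filter_filter]
          apply Finset.filter_congr; intro j _; simp [and_comm]]
        exact Finset.card_filter_add_card_filter_not
          (s := univ.filter fun j : Fin M => B i j = true)
          (p := fun j : Fin M => (j : ℕ) < k)
      have h3 : ((univ.filter fun j : Fin M => B i j = true).filter
          (fun j : Fin M => ¬ ((j : ℕ) < k))).card ≤ M - min k M := by
        refine le_trans (Finset.card_le_card
          (Finset.filter_subset_filter (fun j : Fin M => ¬ ((j : ℕ) < k))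
            (Finset.filter_subset (fun j : Fin M => B i j = true) univ))) ?_
        rw [show (univ.filter fun j : Fin M => ¬ ((j : ℕ) < k)).card
            = M - min k M from by
          have := Finset.card_filter_add_card_filter_not
            (s := (univ : Finset (Fin M))) (p := fun j : Fin M => (j : ℕ) < k)
          rw [card_lt] at this
          simp only [Finset.card_univ, Fintype.card_fin] at this
          omega]
      have h4 := hlamN i
      omega
    exact_mod_cast hnat
  calc ∑ j ∈ univ.filter (fun j : Fin M => (j : ℕ) < k), (mu j : ℤ)
      ≤ ∑ j ∈ univ.filter (fun j : Fin M => (j : ℕ) < k),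
          ((N : ℤ) - ((univ.filter fun i => B i j = true).card : ℤ)) := step1
    _ ≤ ∑ j ∈ univ.filter (fun j : Fin M => (j : ℕ) < k),
          ((N : ℤ) - (conjPart lam (M - (j : ℕ)) : ℤ)) := by
        rw [Finset.sum_sub_distrib, Finset.sum_sub_distrib]
        exact sub_le_sub_left core _

end Key


section Diag
variable {n m : ℕ}

def Tstar (n m : ℕ) (lam : Fin n → ℕ) : Tab n m :=
  fun p => (decide (m - (p.2 : ℕ) ≤ lam p.1), true)

lemma Tstar_zexp (lam : Fin n → ℕ) (hb : ∀ i, lam i ≤ m) :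
    zexp (Tstar n m lam) = natToZ lam := by
  funext i
  rw [zexp]
  rw [Finset.sum_congr rfl (fun j _ =>
    show zp (Tstar n m lam (i, j)) = if m - (j : ℕ) ≤ lam i then (1 : ℤ) else 0 from by
      by_cases h : m - (j : ℕ) ≤ lam i <;> simp [Tstar, zp, h])]
  rw [Finset.sum_boole, card_le_part (lam i) (hb i)]
  rfl

lemma Tstar_yexp (lam : Fin n → ℕ) (hb : ∀ i, lam i ≤ m) :
    yexp (Tstar n m lam) = natToZ (boxCompl m lam) := by
  funext j
  rw [yexp]
  rw [Finset.sum_congr rfl (fun i _ =>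
    show yp (Tstar n m lam (i, j)) = if ¬ (m - (j : ℕ) ≤ lam i) then (1 : ℤ) else 0 from by
      by_cases h : m - (j : ℕ) ≤ lam i <;> simp [Tstar, yp, h])]
  rw [Finset.sum_boole]
  have hsplit := Finset.card_filter_add_card_filter_not
    (s := (univ : Finset (Fin n))) (p := fun i => m - (j : ℕ) ≤ lam i)
  simp only [Finset.card_univ, Fintype.card_fin] at hsplit
  have hc : (univ.filter fun i : Fin n => m - (j : ℕ) ≤ lam i).card
      = conjPart lam (m - (j : ℕ)) := rfl
  show _ = ((n - conjPart lam (m - (j : ℕ)) : ℕ) : ℤ)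
  rw [← hc]
  omega

lemma Tstar_sgn (lam : Fin n → ℕ) (hb : ∀ i, lam i ≤ m) :
    sgn (Tstar n m lam) = (-1) ^ (∑ i, lam i) := by
  rw [sgn]
  rw [Finset.prod_congr rfl (fun p _ =>
    show sg (Tstar n m lam p) = if m - (p.2 : ℕ) ≤ lam p.1 then (-1 : ℂ) else 1 from by
      by_cases h : m - (p.2 : ℕ) ≤ lam p.1 <;> simp [Tstar, sg, h])]
  rw [Finset.prod_ite, Finset.prod_const, Finset.prod_const_one, mul_one]
  congr 1
  rw [Finset.card_filter, Fintype.sum_prod_type]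
  rw [Finset.sum_congr rfl (fun i _ => show
      (∑ j : Fin m, if m - (j : ℕ) ≤ lam i then 1 else 0) = lam i from by
    rw [← Finset.card_filter]
    exact card_le_part (lam i) (hb i))]

lemma diag_unique (lam : Fin n → ℕ) (hb : ∀ i, lam i ≤ m) (T : Tab n m)
    (hz : zexp T = natToZ lam) (hy : yexp T = natToZ (boxCompl m lam)) :
    T = Tstar n m lam := by
  classical
  -- row and column counts
  have hrz : ∀ i, (lam i : ℤ) ≤ ((univ.filter fun j => (T (i, j)).1 = true).card : ℤ) := by
    intro i
    have := zexp_le_card T i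
    rw [hz] at this
    exact this
  have hrzN : ∀ i, lam i ≤ (univ.filter fun j => (T (i, j)).1 = true).card := by
    intro i; exact_mod_cast hrz i
  have hcolsplit : ∀ j, (univ.filter fun i => (T (i, j)).1 = false).card
      + (univ.filter fun i => (T (i, j)).1 = true).card = n := by
    intro j
    rw [show (univ.filter fun i => (T (i, j)).1 = false)
        = (univ.filter fun i : Fin n => ¬ ((T (i, j)).1 = true)) from by
      apply Finset.filter_congr; intro i _; simp]
    rw [add_comm, Finset.card_filter_add_card_filter_not]
    simp
  have hcz : ∀ j, (univ.filter fun i => (T (i, j)).1 = true).card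
      ≤ conjPart lam (m - (j : ℕ)) := by
    intro j
    have h1 := yexp_le_card T j
    rw [hy] at h1
    have h2 : natToZ (boxCompl m lam) j = ((n - conjPart lam (m - (j : ℕ)) : ℕ) : ℤ) := rfl
    rw [h2] at h1
    have h3 := conjPart_le lam (m - (j : ℕ))
    have h4 := hcolsplit j
    omega
  -- total counts
  have htot1 : ∑ j : Fin m, (univ.filter fun i => (T (i, j)).1 = true).card
      = ∑ i : Fin n, (univ.filter fun j => (T (i, j)).1 = true).card :=
    sum_card_filter_comm univ (fun i j => (T (i, j)).1 = true)
  have htot2 : ∑ j : Fin m, conjPart lam (m - (j : ℕ)) = ∑ i, lam i := by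
    simp only [conjPart]
    rw [sum_card_filter_comm univ (fun i (j : Fin m) => m - (j : ℕ) ≤ lam i)]
    exact Finset.sum_congr rfl fun i _ => card_le_part (lam i) (hb i)
  -- sandwich
  have hchain : ∑ i, lam i ≤ ∑ i : Fin n, (univ.filter fun j => (T (i, j)).1 = true).card :=
    Finset.sum_le_sum fun i _ => hrzN i
  have hchain2 : ∑ j : Fin m, (univ.filter fun i => (T (i, j)).1 = true).card
      ≤ ∑ j : Fin m, conjPart lam (m - (j : ℕ)) :=
    Finset.sum_le_sum fun j _ => hcz j
  have hrz_eq : ∀ i, lam i = (univ.filter fun j => (T (i, j)).1 = true).card := by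
    intro i
    refine (Finset.sum_eq_sum_iff_of_le (fun i _ => hrzN i)).mp ?_ i (Finset.mem_univ i)
    omega
  have hcz_eq : ∀ j, (univ.filter fun i => (T (i, j)).1 = true).card
      = conjPart lam (m - (j : ℕ)) := by
    intro j
    refine (Finset.sum_eq_sum_iff_of_le (fun j _ => hcz j)).mp ?_ j (Finset.mem_univ j)
    omega
  -- all second components are true
  have hsnd : ∀ p : Fin n × Fin m, (T p).2 = true := by
    rintro ⟨i, j⟩
    by_cases hfst : (T (i, j)).1 = true
    · -- use z-side equality
      have hsum : ∑ j', zp (T (i, j')) = ∑ j' : Fin m,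
          (if (T (i, j')).1 = true then (1 : ℤ) else 0) := by
        rw [Finset.sum_boole]
        have := congrFun hz i
        rw [zexp] at this
        rw [this, ← hrz_eq i]
        rfl
      have hpt := (Finset.sum_eq_sum_iff_of_le (fun j' _ => zp_le_ite (T (i, j')))).mp
        hsum j (Finset.mem_univ j)
      rw [if_pos hfst] at hpt
      rcases hc : T (i, j) with ⟨c1, c2⟩
      rw [hc] at hfst hpt
      cases c1 <;> cases c2 <;> simp_all [zp]
    · -- use y-side equality
      have hcy : natToZ (boxCompl m lam) j
          = ((univ.filter fun i => (T (i, j)).1 = false).card : ℤ) := by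
        have h2 : natToZ (boxCompl m lam) j
            = ((n - conjPart lam (m - (j : ℕ)) : ℕ) : ℤ) := rfl
        have h3 := conjPart_le lam (m - (j : ℕ))
        have h4 := hcolsplit j
        have h5 := hcz_eq j
        rw [h2]
        omega
      have hsum : ∑ i', yp (T (i', j)) = ∑ i' : Fin n,
          (if (T (i', j)).1 = false then (1 : ℤ) else 0) := by
        rw [Finset.sum_boole]
        have := congrFun hy j
        rw [yexp] at this
        rw [this, hcy]
      have hpt := (Finset.sum_eq_sum_iff_of_le (fun i' _ => yp_le_ite (T (i', j)))).mp
        hsum i (Finset.mem_univ i)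
      rw [if_pos (by simpa using hfst)] at hpt
      rcases hc : T (i, j) with ⟨c1, c2⟩
      rw [hc] at hfst hpt
      cases c1 <;> cases c2 <;> simp_all [yp]
  -- partial column counts are forced
  have hA : ∀ (k : ℕ), k ≤ m → ∀ i,
      (univ.filter fun j : Fin m => (j : ℕ) < k ∧ (T (i, j)).1 = true).card
        = k - (m - lam i) := by
    intro k hk i
    -- lower bound for each row
    have hlow : ∀ i', k - (m - lam i')
        ≤ (univ.filter fun j : Fin m => (j : ℕ) < k ∧ (T (i', j)).1 = true).card := by
      intro i'
      have hsplit2 : ((univ.filter (fun j : Fin m => (T (i', j)).1 = true)).filter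
            (fun j : Fin m => (j : ℕ) < k)).card
          + ((univ.filter fun j : Fin m => (T (i', j)).1 = true).filter
            (fun j : Fin m => ¬ ((j : ℕ) < k))).card
          = (univ.filter fun j : Fin m => (T (i', j)).1 = true).card :=
        Finset.card_filter_add_card_filter_not
          (s := univ.filter fun j : Fin m => (T (i', j)).1 = true)
          (p := fun j : Fin m => (j : ℕ) < k)
      have hmerge : ((univ.filter (fun j : Fin m => (T (i', j)).1 = true)).filter
            (fun j : Fin m => (j : ℕ) < k))
          = univ.filter fun j : Fin m => (j : ℕ) < k ∧ (T (i', j)).1 = true := by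
        rw [Finset.filter_filter]
        apply Finset.filter_congr; intro j _; simp [and_comm]
      have hrest : ((univ.filter fun j : Fin m => (T (i', j)).1 = true).filter
            (fun j : Fin m => ¬ ((j : ℕ) < k))).card ≤ m - min k m := by
        refine le_trans (Finset.card_le_card
          (Finset.filter_subset_filter (fun j : Fin m => ¬ ((j : ℕ) < k))
            (Finset.filter_subset (fun j : Fin m => (T (i', j)).1 = true) univ))) ?_
        have hsp := Finset.card_filter_add_card_filter_not
          (s := (univ : Finset (Fin m))) (p := fun j : Fin m => (j : ℕ) < k)
        rw [card_lt] at hsp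
        simp only [Finset.card_univ, Fintype.card_fin] at hsp
        omega
      rw [hmerge] at hsplit2
      have h4 := hrz_eq i'
      omega
    -- sum equality
    have hsum1 : ∑ j ∈ univ.filter (fun j : Fin m => (j : ℕ) < k),
          (univ.filter fun i' => (T (i', j)).1 = true).card
        = ∑ i' : Fin n,
          (univ.filter fun j : Fin m => (j : ℕ) < k ∧ (T (i', j)).1 = true).card := by
      rw [sum_card_filter_comm (univ.filter (fun j : Fin m => (j : ℕ) < k))
        (fun i' (j : Fin m) => (T (i', j)).1 = true)]
      refine Finset.sum_congr rfl fun i' _ => ?_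
      rw [Finset.filter_filter]
    have hsum2 : ∑ j ∈ univ.filter (fun j : Fin m => (j : ℕ) < k),
          conjPart lam (m - (j : ℕ))
        = ∑ i' : Fin n, (k - (m - lam i')) := by
      simp only [conjPart]
      rw [sum_card_filter_comm (univ.filter (fun j : Fin m => (j : ℕ) < k))
        (fun i' (j : Fin m) => m - (j : ℕ) ≤ lam i')]
      refine Finset.sum_congr rfl fun i' _ => ?_
      rw [Finset.filter_filter, card_lt_and_le k (lam i') (hb i')]
      omega
    have hsum3 : ∑ j ∈ univ.filter (fun j : Fin m => (j : ℕ) < k),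
          (univ.filter fun i' => (T (i', j)).1 = true).card
        = ∑ j ∈ univ.filter (fun j : Fin m => (j : ℕ) < k),
          conjPart lam (m - (j : ℕ)) :=
      Finset.sum_congr rfl fun j _ => hcz_eq j
    have := (Finset.sum_eq_sum_iff_of_le (fun i' _ => hlow i')).mp
      (by rw [← hsum1, hsum3, hsum2]) i (Finset.mem_univ i)
    omega
  -- determine each cell
  funext p
  rcases p with ⟨i, j⟩
  have hk1 : (j : ℕ) + 1 ≤ m := j.isLt
  have hAj := hA (j : ℕ) (le_of_lt j.isLt) i
  have hAj1 := hA ((j : ℕ) + 1) hk1 i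
  have hstep : (univ.filter fun j' : Fin m =>
        (j' : ℕ) < (j : ℕ) + 1 ∧ (T (i, j')).1 = true).card
      = (univ.filter fun j' : Fin m => (j' : ℕ) < (j : ℕ) ∧ (T (i, j')).1 = true).card
        + (if (T (i, j)).1 = true then 1 else 0) := by
    rw [Finset.card_filter, Finset.card_filter]
    rw [show (if (T (i, j)).1 = true then 1 else 0)
        = ∑ j' : Fin m, (if j' = j ∧ (T (i, j')).1 = true then 1 else 0) from by
      rw [Finset.sum_congr rfl (fun j' _ => show
          (if j' = j ∧ (T (i, j')).1 = true then 1 else 0)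
            = if j' = j then (if (T (i, j')).1 = true then 1 else 0) else 0 from by
        by_cases h1 : j' = j <;> by_cases h2 : (T (i, j')).1 = true <;> simp [h1, h2])]
      rw [Finset.sum_ite_eq' univ j (fun j' => if (T (i, j')).1 = true then 1 else 0)]
      simp]
    rw [← Finset.sum_add_distrib]
    refine Finset.sum_congr rfl fun j' _ => ?_
    by_cases h1 : (j' : ℕ) < (j : ℕ)
    · have : (j' : ℕ) < (j : ℕ) + 1 := by omega
      have hne : ¬ (j' = j) := by intro h; rw [h] at h1; omega
      by_cases h2 : (T (i, j')).1 = true <;> simp [h1, h2, this, hne]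
    · by_cases heq : j' = j
      · subst heq
        by_cases h2 : (T (i, j')).1 = true <;> simp [h1, h2]
      · have : ¬ ((j' : ℕ) < (j : ℕ) + 1) := by
          have := Fin.val_ne_of_ne heq
          omega
        by_cases h2 : (T (i, j')).1 = true <;> simp [h1, h2, this, heq]
  have hiff : ((T (i, j)).1 = true) ↔ (m - (j : ℕ) ≤ lam i) := by
    have hbi := hb i
    have hjm := j.isLt
    rw [hAj1, hAj] at hstep
    constructor
    · intro htrue
      rw [if_pos htrue] at hstep
      omega
    · intro hcond
      by_contra hne
      rw [if_neg hne] at hstep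
      omega
  have hfst : (T (i, j)).1 = decide (m - (j : ℕ) ≤ lam i) := by
    cases hfb : (T (i, j)).1
    · rw [hfb] at hiff
      exact (decide_eq_false_iff_not.mpr (fun hp => by simpa using hiff.mpr hp)).symm
    · exact (decide_eq_true_iff.mpr (hiff.mp hfb)).symm
  have hsnd' := hsnd (i, j)
  show T (i, j) = (decide (m - (j : ℕ) ≤ lam i), true)
  rcases hc : T (i, j) with ⟨c1, c2⟩
  rw [hc] at hfst hsnd'
  simp only at hfst hsnd'
  rw [hfst, hsnd']

lemma csum_diag (lam : Fin n → ℕ) (hb : ∀ i, lam i ≤ m) :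
    csum n m (natToZ lam) (natToZ (boxCompl m lam)) = (-1) ^ (∑ i, lam i) := by
  rw [csum]
  rw [show univ.filter (fun T : Tab n m =>
        zexp T = natToZ lam ∧ yexp T = natToZ (boxCompl m lam))
      = {Tstar n m lam} from by
    ext T
    simp only [Finset.mem_filter, Finset.mem_univ, true_and, Finset.mem_singleton]
    constructor
    · rintro ⟨h1, h2⟩; exact diag_unique lam hb T h1 h2
    · rintro rfl; exact ⟨Tstar_zexp lam hb, Tstar_yexp lam hb⟩]
  rw [Finset.sum_singleton, Tstar_sgn lam hb]

end Diag


section Main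

attribute [local instance 0] Classical.propDecidable

variable {n m : ℕ}

def toBox {k B : ℕ} (v : Fin k → ℕ) : Fin k → Fin (B + 1) :=
  fun i => ⟨min (v i) B, by omega⟩

lemma toBox_eq_iff {k B : ℕ} {v : Fin k → ℕ} (hv : ∀ i, v i ≤ B) {w : Fin k → Fin (B + 1)} :
    toBox v = w ↔ v = fun i => (w i : ℕ) := by
  constructor
  · rintro rfl
    funext i
    simp [toBox, min_eq_left (hv i)]
  · rintro rfl
    funext i
    exact Fin.ext (by simp [toBox, min_eq_left (Fin.is_le (w i))])

lemma boxCompl_antitone (lam : Fin n → ℕ) : IsPartition (boxCompl m lam) := by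
  intro j j' hjj'
  have h1 : conjPart lam (m - (j : ℕ)) ≤ conjPart lam (m - (j' : ℕ)) := by
    apply Finset.card_le_card
    intro i hi
    rw [Finset.mem_filter] at hi ⊢
    refine ⟨hi.1, le_trans ?_ hi.2⟩
    omega
  exact Nat.sub_le_sub_left h1 n

lemma sum_sum_mul {A B : Type*} (s : Finset A) (t : Finset B) (c : ℂ)
    (f : A → ℂ) (g : B → ℂ) :
    ∑ a ∈ s, ∑ b ∈ t, c * f a * g b = c * (∑ a ∈ s, f a) * (∑ b ∈ t, g b) := by
  rw [mul_assoc, Finset.sum_mul_sum, Finset.mul_sum]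
  refine Finset.sum_congr rfl fun a _ => ?_
  rw [Finset.mul_sum]
  refine Finset.sum_congr rfl fun b _ => ?_
  ring

lemma pair_sum (z : Fin n → ℂ) (y : Fin m → ℂ)
    (lb : Fin n → Fin (m + 1)) (mb : Fin m → Fin (n + 1)) :
    ∑ T ∈ univ.filter (fun T : Tab n m =>
        toBox (part (zexp T)) = lb ∧ toBox (part (yexp T)) = mb),
      sgn T * zMon z (zexp T) * zMon y (yexp T)
    = (if IsPartition (fun i => (lb i : ℕ)) ∧ IsPartition (fun j => (mb j : ℕ))
        then csum n m (natToZ fun i => (lb i : ℕ)) (natToZ fun j => (mb j : ℕ)) else 0)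
      * bcMono n (natToZ fun i => (lb i : ℕ)) z
      * bcMono m (natToZ fun j => (mb j : ℕ)) y := by
  classical
  have hfz : ∀ T : Tab n m, toBox (part (zexp T)) = lb ↔ part (zexp T) = fun i => (lb i : ℕ) :=
    fun T => toBox_eq_iff (fun i => part_le (fun i' => abs_zexp_le T i') i)
  have hfy : ∀ T : Tab n m, toBox (part (yexp T)) = mb ↔ part (yexp T) = fun j => (mb j : ℕ) :=
    fun T => toBox_eq_iff (fun j => part_le (fun j' => abs_yexp_le T j') j)
  by_cases hpart : IsPartition (fun i => (lb i : ℕ)) ∧ IsPartition (fun j => (mb j : ℕ))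
  · rw [if_pos hpart]
    have hmaps : ∀ T ∈ univ.filter (fun T : Tab n m =>
        toBox (part (zexp T)) = lb ∧ toBox (part (yexp T)) = mb),
        (zexp T, yexp T) ∈
          (signedOrbit n (natToZ fun i => (lb i : ℕ)))
            ×ˢ (signedOrbit m (natToZ fun j => (mb j : ℕ))) := by
      intro T hT
      rw [Finset.mem_filter] at hT
      rw [Finset.mem_product]
      constructor
      · have := mem_orbit_part (zexp T)
        rwa [(hfz T).mp hT.2.1] at this
      · have := mem_orbit_part (yexp T)
        rwa [(hfy T).mp hT.2.2] at this
    rw [← Finset.sum_fiberwise_of_maps_to hmaps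
      (fun T => sgn T * zMon z (zexp T) * zMon y (yexp T))]
    have hinner : ∀ ab ∈ (signedOrbit n (natToZ fun i => (lb i : ℕ)))
          ×ˢ (signedOrbit m (natToZ fun j => (mb j : ℕ))),
        ∑ T ∈ (univ.filter (fun T : Tab n m =>
            toBox (part (zexp T)) = lb ∧ toBox (part (yexp T)) = mb)).filter
            (fun T => (zexp T, yexp T) = ab),
          sgn T * zMon z (zexp T) * zMon y (yexp T)
        = csum n m (natToZ fun i => (lb i : ℕ)) (natToZ fun j => (mb j : ℕ))
            * zMon z ab.1 * zMon y ab.2 := by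
      rintro ⟨α, β⟩ hab
      rw [Finset.mem_product] at hab
      have hset : (univ.filter (fun T : Tab n m =>
            toBox (part (zexp T)) = lb ∧ toBox (part (yexp T)) = mb)).filter
            (fun T => (zexp T, yexp T) = (α, β))
          = univ.filter (fun T : Tab n m => zexp T = α ∧ yexp T = β) := by
        ext T
        rw [Finset.mem_filter, Finset.mem_filter, Finset.mem_filter, Prod.mk.injEq]
        constructor
        · rintro ⟨⟨h1, -⟩, h2, h3⟩
          exact ⟨h1, h2, h3⟩
        · rintro ⟨h1, h2, h3⟩
          refine ⟨⟨h1, ?_, ?_⟩, h2, h3⟩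
          · rw [hfz T, h2]
            exact part_eq_of_mem hpart.1 hab.1
          · rw [hfy T, h3]
            exact part_eq_of_mem hpart.2 hab.2
      rw [hset]
      have hterm : ∀ T ∈ univ.filter (fun T : Tab n m => zexp T = α ∧ yexp T = β),
          sgn T * zMon z (zexp T) * zMon y (yexp T) = sgn T * (zMon z α * zMon y β) := by
        intro T hT
        rw [Finset.mem_filter] at hT
        rw [hT.2.1, hT.2.2, mul_assoc]
      rw [Finset.sum_congr rfl hterm, ← Finset.sum_mul]
      rw [show (∑ T ∈ univ.filter (fun T : Tab n m => zexp T = α ∧ yexp T = β), sgn T)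
          = csum n m α β from rfl]
      rw [csum_inv hab.1 hab.2, mul_assoc]
    rw [Finset.sum_congr rfl hinner, Finset.sum_product, bcMono, bcMono]
    exact sum_sum_mul _ _ _ _ _
  · rw [if_neg hpart, zero_mul, zero_mul]
    rw [show (univ.filter (fun T : Tab n m =>
        toBox (part (zexp T)) = lb ∧ toBox (part (yexp T)) = mb)) = ∅ from by
      rw [Finset.eq_empty_iff_forall_notMem]
      intro T hT
      rw [Finset.mem_filter] at hT
      refine hpart ⟨?_, ?_⟩
      · rw [← (hfz T).mp hT.2.1]
        exact part_antitone (zexp T)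
      · rw [← (hfy T).mp hT.2.2]
        exact part_antitone (yexp T)]
    rw [Finset.sum_empty]

end Main

end IKE
/-- The expansion `f_{n,m} = ∑_{λ ⊆ m^n} (-1)^{|λ|} m_λ(z) m_{n^m-λ'}(y) + dominated terms`:
there are coefficients `a λ μ`, supported on pairs of partitions in the respective boxes with
`μ` dominated by `n^m - λ'` (equivalently `λ` dominated by `m^n - μ'`), whose diagonal values
are `a λ (n^m - λ') = (-1)^{|λ|}`, expanding the interaction kernel in products of
`BC`-symmetric monomials. -/
theorem interaction_kernel_expansion (n m : ℕ) :
    ∃ a : (Fin n → ℕ) → (Fin m → ℕ) → ℂ,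
      (∀ lam mu, a lam mu ≠ 0 →
        IsPartition lam ∧ IsPartition mu ∧ (∀ i, lam i ≤ m) ∧ (∀ j, mu j ≤ n) ∧
        Dominates (natToZ (boxCompl m lam)) (natToZ mu) ∧
        Dominates (natToZ (boxCompl n mu)) (natToZ lam)) ∧
      (∀ lam : Fin n → ℕ, IsPartition lam → (∀ i, lam i ≤ m) →
        a lam (boxCompl m lam) = (-1) ^ (∑ i, lam i)) ∧
      ∀ (z : Fin n → ℂ) (y : Fin m → ℂ), (∀ i, z i ≠ 0) → (∀ j, y j ≠ 0) →
        interactionKernel n m z y =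
          ∑ lam : Fin n → Fin (m + 1), ∑ mu : Fin m → Fin (n + 1),
            a (fun i => (lam i : ℕ)) (fun j => (mu j : ℕ)) *
              bcMono n (natToZ fun i => (lam i : ℕ)) z *
              bcMono m (natToZ fun j => (mu j : ℕ)) y := by
  classical
  refine ⟨fun l mu => if IsPartition l ∧ IsPartition mu
      then IKE.csum n m (natToZ l) (natToZ mu) else 0, ?_, ?_, ?_⟩
  · -- support conditions
    intro lam mu ha
    simp only [] at ha
    by_cases hp : IsPartition lam ∧ IsPartition mu
    swap
    · rw [if_neg hp] at ha; exact absurd rfl ha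
    rw [if_pos hp] at ha
    obtain ⟨T, hT, -⟩ := Finset.exists_ne_zero_of_sum_ne_zero ha
    rw [Finset.mem_filter] at hT
    obtain ⟨-, hz, hy⟩ := hT
    have hzc : ∀ i, (lam i : ℤ) = IKE.zexp T i := fun i => (congrFun hz i).symm
    have hyc : ∀ j, (mu j : ℤ) = IKE.yexp T j := fun j => (congrFun hy j).symm
    have hlm : ∀ i, lam i ≤ m := by
      intro i
      have h1 := IKE.abs_zexp_le T i
      rw [← hzc i] at h1
      exact_mod_cast le_trans (le_abs_self _) h1
    have hmn : ∀ j, mu j ≤ n := by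
      intro j
      have h1 := IKE.abs_yexp_le T j
      rw [← hyc j] at h1
      exact_mod_cast le_trans (le_abs_self _) h1
    have hlamKey : ∀ i, (lam i : ℤ)
        ≤ ((Finset.univ.filter fun j => (T (i, j)).1 = true).card : ℤ) := by
      intro i; rw [hzc i]; exact IKE.zexp_le_card T i
    have hmuKey : ∀ j, (mu j : ℤ)
        ≤ ((Finset.univ.filter fun i => (T (i, j)).1 = false).card : ℤ) := by
      intro j; rw [hyc j]; exact IKE.yexp_le_card T j
    refine ⟨hp.1, hp.2, hlm, hmn, ?_, ?_⟩
    · intro k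
      have hk := IKE.key (fun i j => (T (i, j)).1) lam mu hlamKey hmuKey k
      refine le_trans hk (le_of_eq (Finset.sum_congr rfl fun j _ => ?_))
      have h1 := IKE.conjPart_le lam (m - (j : ℕ))
      show (n : ℤ) - (conjPart lam (m - (j : ℕ)) : ℤ)
        = ((n - conjPart lam (m - (j : ℕ)) : ℕ) : ℤ)
      omega
    · intro k
      have hlamKey2 : ∀ j, (mu j : ℤ)
          ≤ ((Finset.univ.filter fun i => (!(T (i, j)).1) = true).card : ℤ) := by
        intro j
        rw [show (Finset.univ.filter fun i : Fin n => (!(T (i, j)).1) = true)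
            = (Finset.univ.filter fun i : Fin n => (T (i, j)).1 = false) from by
          apply Finset.filter_congr; intro i _; simp]
        exact hmuKey j
      have hmuKey2 : ∀ i, (lam i : ℤ)
          ≤ ((Finset.univ.filter fun j => (!(T (i, j)).1) = false).card : ℤ) := by
        intro i
        rw [show (Finset.univ.filter fun j : Fin m => (!(T (i, j)).1) = false)
            = (Finset.univ.filter fun j : Fin m => (T (i, j)).1 = true) from by
          apply Finset.filter_congr; intro j _; simp]
        exact hlamKey i
      have hk := IKE.key (fun j i => !(T (i, j)).1) mu lam hlamKey2 hmuKey2 k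
      refine le_trans hk (le_of_eq (Finset.sum_congr rfl fun i _ => ?_))
      have h1 := IKE.conjPart_le mu (n - (i : ℕ))
      show (m : ℤ) - (conjPart mu (n - (i : ℕ)) : ℤ)
        = ((m - conjPart mu (n - (i : ℕ)) : ℕ) : ℤ)
      omega
  · -- diagonal values
    intro lam hpart hb
    show (if IsPartition lam ∧ IsPartition (boxCompl m lam)
        then IKE.csum n m (natToZ lam) (natToZ (boxCompl m lam)) else 0)
      = (-1) ^ (∑ i, lam i)
    rw [if_pos ⟨hpart, IKE.boxCompl_antitone lam⟩]
    exact IKE.csum_diag lam hb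
  · -- the expansion
    intro z y hz hy
    rw [IKE.expand z y hz hy]
    rw [← Finset.sum_fiberwise Finset.univ (fun T : IKE.Tab n m =>
        ((IKE.toBox (IKE.part (IKE.zexp T)) : Fin n → Fin (m + 1)),
         (IKE.toBox (IKE.part (IKE.yexp T)) : Fin m → Fin (n + 1))))
        (fun T => IKE.sgn T * IKE.zMon z (IKE.zexp T) * IKE.zMon y (IKE.yexp T))]
    rw [Fintype.sum_prod_type]
    refine Finset.sum_congr rfl fun lb _ => Finset.sum_congr rfl fun mb _ => ?_
    rw [show (Finset.univ.filter fun T : IKE.Tab n m =>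
          (IKE.toBox (IKE.part (IKE.zexp T)), IKE.toBox (IKE.part (IKE.yexp T))) = (lb, mb))
        = Finset.univ.filter (fun T : IKE.Tab n m =>
          IKE.toBox (IKE.part (IKE.zexp T)) = lb ∧ IKE.toBox (IKE.part (IKE.yexp T)) = mb)
        from by
      apply Finset.filter_congr; intro T _; simp [Prod.mk.injEq]]
    exact IKE.pair_sum z y lb mb
end
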